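/- arXiv:math-ph/0312058 — 5 statements merged into one kernel-verified Lean document; each statement's English description precedes it below -/
import Mathlib

section
/- Let the logarithmic reduction data depend differentiably on (x,t) ∈ ℝ² (′ denotes ∂/∂x, subscript t denotes ∂/∂t), and suppose the string equation holds for every (x,t). Fix j ∈ {0,1,…,n+1}, define F⁰_w := r, F⁰_x := r′w + u′/2, and for j ≥ 1, F^j_w := 1/(w − w_j), F^j_x := w_j′/(w_j − w) + (1/2)(r′/r − w_j′/w_j), and assume the τ_j-flow equations hold: for every (x,t) and every admissible w, r_t w + u_t + Σᵢ aᵢ w_{i,t}/(wᵢ − w) = w·F^j_w·Z_x − w·F^j_x·Z_w and r_t/w + ū_t + Σᵢ āᵢ w̄_{i,t}/(w̄ᵢ − 1/w) = w·F^j_w·Z̄_x − w·F^j_x·Z̄_w. Then ū_t + Σ_l ā_l w̄_{l,t}/w̄_l = δ_{j,0}, and for every k ∈ {1,…,n+1}: a_k·[ r_t/w_k − r·w_{k,t}/w_k² + ū_t + Σ_l ā_l·(w̄_{l,t} + w_{k,t}/w_k²)/(w̄_l − 1/w_k) ] = δ_{j,k}. (That is, ∂_{τ_j} I_k = δ_{jk}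 for the linearizing variables I₀ = ū + Σ ā_l log w̄_l and I_k = a_k·z̄ evaluated at 1/w = 1/w_k.) -/
/-!
Every identity involved is an identity between rational functions of `w` holding off a finite
set, so it can be evaluated at any point once the pole there has been cleared, by continuity.

At `w = ∞` (put `v = 1/w`) the string equation gives `ū′ + Σ ā_l w̄_l′/w̄_l = 0` at leading order
and `r·G(0) − r′·Y(0) = 1` at the next one, where `Z̄_x(1/v) = v·G(v)` and `Z̄_w(1/v) = v²·Y(v)`;
the `z̄`-flow at `v = 0` then reads `∂_τ I₀ = F_w(∞)·G(0) − (v F_x)(∞)·Y(0) = δ_{j0}`.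

At `w = w_k`, the residue of the string equation gives `Z̄_x + w_k′ Z̄_w = 0` there, the residue of
the `z`-flow determines `w_{k,t}`, and `∂_τ I_k = a_k (z̄_t + w_{k,t} Z̄_w)(w_k)` is evaluated with
the `z̄`-flow. For `j = k` the pole of `F^k` cancels against that of `Z_w` through the string
equation, which is where the `1` comes from.
-/

open Finset Filter Topology

theorem ContinuousAt.eq_of_eventuallyEq_nhdsNE {f g : ℂ → ℂ} {p : ℂ}
    (hf : ContinuousAt f p) (hg : ContinuousAt g p) (h : ∀ᶠ w in 𝓝[≠] p, f w = g w) :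
    f p = g p :=
  ((hf.eventuallyEq_nhds_iff_eventuallyEq_nhdsNE hg).mp h).eq_of_nhds

theorem eventually_nhdsNE_ne {X : Type*} [TopologicalSpace X] [T1Space X] (p q : X) :
    ∀ᶠ x in 𝓝[≠] p, x ≠ q := by
  rcases eq_or_ne q p with rfl | h
  · exact self_mem_nhdsWithin
  · exact eventually_ne_nhdsWithin h.symm

theorem continuousAt_finsetSum_div {ι : Type*} {s : Finset ι} {c : ι → ℂ} {d : ι → ℂ → ℂ}
    {p : ℂ} (hd : ∀ i ∈ s, ContinuousAt (d i) p) (hd₀ : ∀ i ∈ s, d i p ≠ 0) :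
    ContinuousAt (fun w => ∑ i ∈ s, c i / d i w) p :=
  tendsto_finsetSum s fun i hi => continuousAt_const.div (hd i hi) (hd₀ i hi)

theorem eq_zero_and_of_eventually_mul_add_sub_eq {P G Q Y : ℂ → ℂ} {c : ℂ}
    (hP : ContinuousAt P 0) (hG : ContinuousAt G 0) (hQ : ContinuousAt Q 0)
    (hY : ContinuousAt Y 0) (hP₀ : P 0 ≠ 0)
    (h : ∀ᶠ v in 𝓝[≠] 0, P v * (c + v * G v) - v * Q v * Y v = v) :
    c = 0 ∧ P 0 * G 0 - Q 0 * Y 0 = 1 := by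
  have hc : P 0 * (c + 0 * G 0) - 0 * Q 0 * Y 0 = 0 :=
    ContinuousAt.eq_of_eventuallyEq_nhdsNE
      (f := fun v => P v * (c + v * G v) - v * Q v * Y v) (by fun_prop) continuousAt_id h
  have hc : c = 0 := by simpa [hP₀] using hc
  refine ⟨hc, ContinuousAt.eq_of_eventuallyEq_nhdsNE (f := fun v => P v * G v - Q v * Y v)
    (g := fun _ => 1) (by fun_prop) continuousAt_const ?_⟩
  filter_upwards [h, self_mem_nhdsWithin] with v hv (hv₀ : v ≠ 0)
  apply mul_left_cancel₀ hv₀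
  linear_combination hv - P v * hc

section PartialFractions

variable {s : Finset ℕ} {c W : ℕ → ℂ} {v : ℂ}

theorem sum_div_inv_sub (hv : v ≠ 0) (hW : ∀ i ∈ s, 1 - W i * v ≠ 0) :
    ∑ i ∈ s, c i / (v⁻¹ - W i) = v * ∑ i ∈ s, c i / (1 - W i * v) := by
  rw [mul_sum]
  refine sum_congr rfl fun i hi => ?_
  have := hW i hi
  field_simp

theorem mul_sum_div_sub_inv (hv : v ≠ 0) (hW : ∀ i ∈ s, 1 - W i * v ≠ 0) :
    v * ∑ i ∈ s, c i / (W i - v⁻¹) = v ^ 2 * ∑ i ∈ s, c i / (W i * v - 1) := by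
  rw [mul_sum, mul_sum]
  refine sum_congr rfl fun i hi => ?_
  have h₁ : W i * v - 1 ≠ 0 := fun h => hW i hi (by linear_combination -h)
  field_simp

theorem sum_div_inv_sq_mul_sub (hv : v ≠ 0) (hW : ∀ i ∈ s, W i - v ≠ 0) :
    ∑ i ∈ s, c i / ((v⁻¹) ^ 2 * (W i - 1 / v⁻¹)) = v ^ 2 * ∑ i ∈ s, c i / (W i - v) := by
  rw [mul_sum]
  refine sum_congr rfl fun i hi => ?_
  have := hW i hi
  field_simp

theorem sum_div_sub_eq_add (hW₀ : ∀ i ∈ s, W i ≠ 0) (hW : ∀ i ∈ s, W i - v ≠ 0) :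
    ∑ i ∈ s, c i / (W i - v) = ∑ i ∈ s, c i / W i + v * ∑ i ∈ s, c i / (W i * (W i - v)) := by
  rw [mul_sum, ← sum_add_distrib]
  refine sum_congr rfl fun i hi => ?_
  have := hW i hi
  have := hW₀ i hi
  field_simp
  ring

end PartialFractions

section SimplePole

variable {p α p' pt C : ℂ} {A B L Zbw Zbx Fw Fx Λ : ℂ → ℂ}

theorem string_residue (hA : ContinuousAt A p) (hB : ContinuousAt B p)
    (hZbw : ContinuousAt Zbw p) (hZbx : ContinuousAt Zbx p)
    (h : ∀ᶠ w in 𝓝[≠] p,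
      w * (α / (w - p) + A w) * Zbx w - w * (α * p' / (p - w) + B w) * Zbw w = 1) :
    p * α * (Zbx p + p' * Zbw p) = 0 := by
  have key := ContinuousAt.eq_of_eventuallyEq_nhdsNE
    (f := fun w => w * α * (Zbx w + p' * Zbw w) + (w - p) * (w * A w * Zbx w - w * B w * Zbw w))
    (g := fun w => w - p) (p := p) (by fun_prop) (by fun_prop) <| by
      filter_upwards [h, self_mem_nhdsWithin] with w hw (hwp : w ≠ p)
      linear_combination (norm := skip) (w - p) * hw
      field_simp
      ring
  simpa using key

theorem flow_residue_of_continuousAt (hFw : ContinuousAt Fw p) (hFx : ContinuousAt Fx p)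
    (hA : ContinuousAt A p) (hB : ContinuousAt B p) (hL : ContinuousAt L p)
    (h : ∀ᶠ w in 𝓝[≠] p, α * pt / (p - w) + L w =
      w * Fw w * (α * p' / (p - w) + B w) - w * Fx w * (α / (w - p) + A w)) :
    α * pt = p * α * (Fw p * p' + Fx p) := by
  have key := ContinuousAt.eq_of_eventuallyEq_nhdsNE
    (f := fun w => α * pt + (p - w) * L w)
    (g := fun w => w * α * (Fw w * p' + Fx w) + (p - w) * w * (Fw w * B w - Fx w * A w))
    (p := p) (by fun_prop) (by fun_prop) <| by
      filter_upwards [h, self_mem_nhdsWithin] with w hw (hwp : w ≠ p)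
      linear_combination (norm := skip) (p - w) * hw
      field_simp
      ring
  simpa using key

theorem flow_residue_of_pole (hA : ContinuousAt A p) (hB : ContinuousAt B p)
    (hL : ContinuousAt L p)
    (h : ∀ᶠ w in 𝓝[≠] p, α * pt / (p - w) + L w =
      w * (w - p)⁻¹ * (α * p' / (p - w) + B w) - w * (p' / (p - w) + C) * (α / (w - p) + A w)) :
    α * pt = p * (C * α - B p - p' * A p) := by
  have key := ContinuousAt.eq_of_eventuallyEq_nhdsNE
    (f := fun w => α * pt + (p - w) * L w)
    (g := fun w => w * (C * α - B w - p' * A w) - (p - w) * w * C * A w)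
    (p := p) (by fun_prop) (by fun_prop) <| by
      filter_upwards [h, self_mem_nhdsWithin] with w hw (hwp : w ≠ p)
      linear_combination (norm := skip) (p - w) * hw
      field_simp
      ring
  simpa using key

theorem tau_flow_at_pole_of_continuousAt (hFw : ContinuousAt Fw p) (hFx : ContinuousAt Fx p)
    (hA : ContinuousAt A p) (hB : ContinuousAt B p) (hL : ContinuousAt L p)
    (hZbw : ContinuousAt Zbw p) (hZbx : ContinuousAt Zbx p) (hΛ : ContinuousAt Λ p)
    (hstring : ∀ᶠ w in 𝓝[≠] p,
      w * (α / (w - p) + A w) * Zbx w - w * (α * p' / (p - w) + B w) * Zbw w = 1)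
    (hz : ∀ᶠ w in 𝓝[≠] p, α * pt / (p - w) + L w =
      w * Fw w * (α * p' / (p - w) + B w) - w * Fx w * (α / (w - p) + A w))
    (hzbar : ∀ᶠ w in 𝓝[≠] p, Λ w = w * Fw w * Zbx w - w * Fx w * Zbw w) :
    α * (Λ p + pt * Zbw p) = 0 := by
  have hres := string_residue hA hB hZbw hZbx hstring
  have hpt := flow_residue_of_continuousAt hFw hFx hA hB hL hz
  have hΛp := hΛ.eq_of_eventuallyEq_nhdsNE (by fun_prop) hzbar
  rw [hΛp]
  linear_combination Fw p * hres + Zbw p * hpt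

theorem tau_flow_at_pole_self (hα : α ≠ 0) (hp : p ≠ 0)
    (hA : ContinuousAt A p) (hB : ContinuousAt B p) (hL : ContinuousAt L p)
    (hZbw : ContinuousAt Zbw p) (hZbx : ContinuousAt Zbx p) (hΛ : ContinuousAt Λ p)
    (hstring : ∀ᶠ w in 𝓝[≠] p,
      w * (α / (w - p) + A w) * Zbx w - w * (α * p' / (p - w) + B w) * Zbw w = 1)
    (hz : ∀ᶠ w in 𝓝[≠] p, α * pt / (p - w) + L w =
      w * (w - p)⁻¹ * (α * p' / (p - w) + B w) - w * (p' / (p - w) + C) * (α / (w - p) + A w))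
    (hzbar : ∀ᶠ w in 𝓝[≠] p,
      Λ w = w * (w - p)⁻¹ * Zbx w - w * (p' / (p - w) + C) * Zbw w) :
    α * (Λ p + pt * Zbw p) = 1 := by
  have hres : Zbx p + p' * Zbw p = 0 := by
    simpa [hα, hp] using string_residue hA hB hZbw hZbx hstring
  have hpt := flow_residue_of_pole hA hB hL hz
  -- the string equation cancels the pole of `Λ` at `p`
  have hΛp := ContinuousAt.eq_of_eventuallyEq_nhdsNE (f := fun w => α * Λ w)
    (g := fun w => 1 - w * A w * Zbx w + w * B w * Zbw w - α * C * w * Zbw w) (p := p)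
    (by fun_prop) (by fun_prop) <| by
      filter_upwards [hstring, hzbar] with w hs hw
      linear_combination α * hw + hs
  linear_combination hΛp + Zbw p * hpt - p * A p * hres

end SimplePole

section Pointwise

variable {s : Finset ℕ} {a abar W Wb Wx Wbx Wt Wbt : ℕ → ℂ} {r rx ux ubarx rt ut ubart : ℂ}
  {Zw Zx Zbw Zbx Fw Fx : ℂ → ℂ} {j k : ℕ}

theorem eventually_nhdsNE_admissible (s : Finset ℕ) (W Wb : ℕ → ℂ) (p : ℂ) :
    ∀ᶠ w in 𝓝[≠] p, w ≠ 0 ∧ (∀ i ∈ s, w ≠ W i) ∧ (∀ i ∈ s, w ≠ (Wb i)⁻¹) :=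
  (eventually_nhdsNE_ne p 0).and <|
    (eventually_all_finset s |>.mpr fun i _ => eventually_nhdsNE_ne p (W i)).and
      (eventually_all_finset s |>.mpr fun i _ => eventually_nhdsNE_ne p (Wb i)⁻¹)

theorem eventually_nhdsNE_zero_admissible_inv (hWb : ∀ i ∈ s, Wb i ≠ 0) :
    ∀ᶠ v in 𝓝[≠] (0 : ℂ), v ≠ 0 ∧ (∀ i ∈ s, 1 - W i * v ≠ 0) ∧ (∀ i ∈ s, Wb i - v ≠ 0) := by
  have h₁ : ∀ q : ℂ, ∀ᶠ v in 𝓝 (0 : ℂ), 1 - q * v ≠ 0 := fun q =>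
    (by fun_prop : ContinuousAt (fun v => 1 - q * v) 0).eventually_ne (by simp)
  have h₂ : ∀ i ∈ s, ∀ᶠ v in 𝓝 (0 : ℂ), Wb i - v ≠ 0 := fun i hi =>
    (by fun_prop : ContinuousAt (fun v => Wb i - v) 0).eventually_ne (by simpa using hWb i hi)
  filter_upwards [self_mem_nhdsWithin,
    nhdsWithin_le_nhds ((eventually_all_finset s).mpr fun i _ => h₁ (W i)),
    nhdsWithin_le_nhds ((eventually_all_finset s).mpr h₂)] with v hv hW hWbv using ⟨hv, hW, hWbv⟩

theorem admissible_inv {v : ℂ} (hv : v ≠ 0) (hW : ∀ i ∈ s, 1 - W i * v ≠ 0)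
    (hWb : ∀ i ∈ s, Wb i - v ≠ 0) :
    v⁻¹ ≠ 0 ∧ (∀ i ∈ s, v⁻¹ ≠ W i) ∧ (∀ i ∈ s, v⁻¹ ≠ (Wb i)⁻¹) :=
  ⟨inv_ne_zero hv, fun i hi h => hW i hi (by rw [← h, inv_mul_cancel₀ hv, sub_self]),
    fun i hi h => hWb i hi (by rw [inv_inj.mp h, sub_self])⟩

theorem Zbw_inv_eq {v : ℂ}
    (hZbw : ∀ w, Zbw w = -r / w ^ 2 + ∑ i ∈ s, abar i / (w ^ 2 * (Wb i - 1 / w)))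
    (hv : v ≠ 0) (hWb : ∀ i ∈ s, Wb i - v ≠ 0) :
    Zbw v⁻¹ = v ^ 2 * (-r + ∑ i ∈ s, abar i / (Wb i - v)) := by
  rw [hZbw, sum_div_inv_sq_mul_sub hv hWb, inv_pow, div_inv_eq_mul]
  ring

theorem Zbx_inv_eq {v : ℂ}
    (hZbx : ∀ w, Zbx w = rx / w + ubarx + ∑ i ∈ s, abar i * Wbx i / (Wb i - 1 / w))
    (hWb₀ : ∀ i ∈ s, Wb i ≠ 0) (hWb : ∀ i ∈ s, Wb i - v ≠ 0) :
    Zbx v⁻¹ = (ubarx + ∑ i ∈ s, abar i * Wbx i / Wb i)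
      + v * (rx + ∑ i ∈ s, abar i * Wbx i / (Wb i * (Wb i - v))) := by
  rw [hZbx, one_div v⁻¹, inv_inv, div_inv_eq_mul, sum_div_sub_eq_add hWb₀ hWb]
  ring

theorem string_at_infinity (hr : r ≠ 0) (hWb : ∀ i ∈ s, Wb i ≠ 0)
    (hZw : ∀ w, Zw w = r + ∑ i ∈ s, a i / (w - W i))
    (hZx : ∀ w, Zx w = rx * w + ux + ∑ i ∈ s, a i * Wx i / (W i - w))
    (hZbw : ∀ w, Zbw w = -r / w ^ 2 + ∑ i ∈ s, abar i / (w ^ 2 * (Wb i - 1 / w)))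
    (hZbx : ∀ w, Zbx w = rx / w + ubarx + ∑ i ∈ s, abar i * Wbx i / (Wb i - 1 / w))
    (hstring : ∀ w : ℂ, w ≠ 0 → (∀ i ∈ s, w ≠ W i) → (∀ i ∈ s, w ≠ (Wb i)⁻¹) →
      w * Zw w * Zbx w - w * Zx w * Zbw w = 1) :
    ubarx + ∑ i ∈ s, abar i * Wbx i / Wb i = 0 ∧
      r * (rx + ∑ i ∈ s, abar i * Wbx i / (Wb i * Wb i)) - rx * (-r + ∑ i ∈ s, abar i / Wb i)
        = 1 := by
  set P := fun v => r + v * ∑ i ∈ s, a i / (1 - W i * v)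
  set Q := fun v => rx + v * ux + v ^ 2 * ∑ i ∈ s, a i * Wx i / (W i * v - 1)
  set G := fun v => rx + ∑ i ∈ s, abar i * Wbx i / (Wb i * (Wb i - v))
  set Y := fun v => -r + ∑ i ∈ s, abar i / (Wb i - v)
  have hP : ContinuousAt P 0 := continuousAt_const.add <| continuousAt_id.mul <|
    continuousAt_finsetSum_div (fun _ _ => by fun_prop) (by simp)
  have hQ : ContinuousAt Q 0 := (by fun_prop : ContinuousAt (fun v => rx + v * ux) 0).add <|
    (continuous_pow 2).continuousAt.mul <|
      continuousAt_finsetSum_div (fun _ _ => by fun_prop) (by simp)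
  have hG : ContinuousAt G 0 := continuousAt_const.add <|
    continuousAt_finsetSum_div (fun _ _ => by fun_prop) (by simpa using hWb)
  have hY : ContinuousAt Y 0 := continuousAt_const.add <|
    continuousAt_finsetSum_div (fun _ _ => by fun_prop) (by simpa using hWb)
  have hstring' : ∀ᶠ v in 𝓝[≠] 0, P v * ((ubarx + ∑ i ∈ s, abar i * Wbx i / Wb i) + v * G v)
      - v * Q v * Y v = v := by
    filter_upwards [eventually_nhdsNE_zero_admissible_inv (W := W) hWb] with v hv
    obtain ⟨hv, hW, hWbv⟩ := hv
    obtain ⟨h₀, h₁, h₂⟩ := admissible_inv hv hW hWbv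
    have h := hstring v⁻¹ h₀ h₁ h₂
    have hP : Zw v⁻¹ = P v := by rw [hZw, sum_div_inv_sub hv hW]
    have hQ : v * Zx v⁻¹ = Q v := by
      rw [hZx, mul_add, mul_add, mul_sum_div_sub_inv hv hW, mul_left_comm, mul_inv_cancel₀ hv,
        mul_one]
    rw [hP, Zbw_inv_eq hZbw hv hWbv, Zbx_inv_eq hZbx hWb hWbv] at h
    linear_combination (norm := skip) v * h + v * Y v * hQ
    field_simp
    ring
  simpa [P, Q, G, Y] using
    eq_zero_and_of_eventually_mul_add_sub_eq hP hG hQ hY (by simpa [P] using hr) hstring'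

theorem tau_flow_F_inv (hFw : ∀ w, Fw w = if j = 0 then r else (w - W j)⁻¹)
    (hFx : ∀ w, Fx w = if j = 0 then rx * w + ux / 2 else
      Wx j / (W j - w) + (1 / 2) * (rx / r - Wx j / W j)) {v : ℂ} (hv : v ≠ 0) :
    Fw v⁻¹ = (if j = 0 then r else v / (1 - W j * v)) ∧
      v * Fx v⁻¹ = if j = 0 then rx + v * (ux / 2) else
        v ^ 2 * Wx j / (W j * v - 1) + v * (1 / 2 * (rx / r - Wx j / W j)) := by
  simp only [hFw, hFx]
  split_ifs
  · exact ⟨rfl, by field_simp⟩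
  · exact ⟨by field_simp, by field_simp⟩

theorem tau_flow_I_zero (hr : r ≠ 0) (hWb : ∀ i ∈ s, Wb i ≠ 0)
    (hZw : ∀ w, Zw w = r + ∑ i ∈ s, a i / (w - W i))
    (hZx : ∀ w, Zx w = rx * w + ux + ∑ i ∈ s, a i * Wx i / (W i - w))
    (hZbw : ∀ w, Zbw w = -r / w ^ 2 + ∑ i ∈ s, abar i / (w ^ 2 * (Wb i - 1 / w)))
    (hZbx : ∀ w, Zbx w = rx / w + ubarx + ∑ i ∈ s, abar i * Wbx i / (Wb i - 1 / w))
    (hstring : ∀ w : ℂ, w ≠ 0 → (∀ i ∈ s, w ≠ W i) → (∀ i ∈ s, w ≠ (Wb i)⁻¹) →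
      w * Zw w * Zbx w - w * Zx w * Zbw w = 1)
    (hFw : ∀ w, Fw w = if j = 0 then r else (w - W j)⁻¹)
    (hFx : ∀ w, Fx w = if j = 0 then rx * w + ux / 2 else
      Wx j / (W j - w) + (1 / 2) * (rx / r - Wx j / W j))
    (hzbar : ∀ w : ℂ, w ≠ 0 → (∀ i ∈ s, w ≠ W i) → (∀ i ∈ s, w ≠ (Wb i)⁻¹) →
      rt / w + ubart + ∑ i ∈ s, abar i * Wbt i / (Wb i - 1 / w)
        = w * Fw w * Zbx w - w * Fx w * Zbw w) :
    ubart + ∑ l ∈ s, abar l * Wbt l / Wb l = if j = 0 then 1 else 0 := by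
  obtain ⟨hc, hnorm⟩ := string_at_infinity hr hWb hZw hZx hZbw hZbx hstring
  set Φ := fun v => if j = 0 then r else v / (1 - W j * v)
  set Ψ := fun v => if j = 0 then rx + v * (ux / 2) else
    v ^ 2 * Wx j / (W j * v - 1) + v * (1 / 2 * (rx / r - Wx j / W j))
  set G := fun v => rx + ∑ i ∈ s, abar i * Wbx i / (Wb i * (Wb i - v))
  set Y := fun v => -r + ∑ i ∈ s, abar i / (Wb i - v)
  set Λ := fun v => rt * v + ubart + ∑ i ∈ s, abar i * Wbt i / (Wb i - v)
  have hΦ : ContinuousAt Φ 0 := by simp only [Φ]; split_ifs <;> fun_prop (disch := simp)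
  have hΨ : ContinuousAt Ψ 0 := by simp only [Ψ]; split_ifs <;> fun_prop (disch := simp)
  have hG : ContinuousAt G 0 := continuousAt_const.add <|
    continuousAt_finsetSum_div (fun _ _ => by fun_prop) (by simpa using hWb)
  have hY : ContinuousAt Y 0 := continuousAt_const.add <|
    continuousAt_finsetSum_div (fun _ _ => by fun_prop) (by simpa using hWb)
  have hΛ : ContinuousAt Λ 0 := (by fun_prop : ContinuousAt (fun v => rt * v + ubart) 0).add <|
    continuousAt_finsetSum_div (fun _ _ => by fun_prop) (by simpa using hWb)
  have hflow : Λ 0 = Φ 0 * G 0 - Ψ 0 * Y 0 := by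
    refine hΛ.eq_of_eventuallyEq_nhdsNE (g := fun v => Φ v * G v - Ψ v * Y v) (by fun_prop) ?_
    filter_upwards [eventually_nhdsNE_zero_admissible_inv (W := W) hWb] with v hv
    obtain ⟨hv, hW, hWbv⟩ := hv
    obtain ⟨h₀, h₁, h₂⟩ := admissible_inv hv hW hWbv
    obtain ⟨hΦv, hΨv⟩ := tau_flow_F_inv hFw hFx hv
    have h := hzbar v⁻¹ h₀ h₁ h₂
    rw [one_div v⁻¹, inv_inv, div_inv_eq_mul, Zbw_inv_eq hZbw hv hWbv, Zbx_inv_eq hZbx hWb hWbv,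
      hc, hΦv] at h
    simp only [Λ, Φ, Ψ, h, ← hΨv]
    field_simp
    ring
  have hΛ₀ : Λ 0 = ubart + ∑ l ∈ s, abar l * Wbt l / Wb l := by simp [Λ]
  rw [← hΛ₀, hflow]
  split_ifs with hj
  · simpa [Φ, Ψ, G, Y, hj] using hnorm
  · simp [Φ, Ψ, hj]

theorem continuousAt_linear_add_sum_div_sub {t : Finset ℕ} {c₁ c₂ : ℂ} {e : ℕ → ℂ} {p : ℂ}
    (hW : ∀ i ∈ t, W i - p ≠ 0) :
    ContinuousAt (fun w => c₁ * w + c₂ + ∑ i ∈ t, e i / (W i - w)) p :=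
  (by fun_prop : ContinuousAt (fun w => c₁ * w + c₂) p).add <|
    continuousAt_finsetSum_div (fun _ _ => by fun_prop) hW

theorem continuousAt_div_add_add_sum_div_sub_inv {c₁ c₂ : ℂ} {e : ℕ → ℂ} {p : ℂ} (hp : p ≠ 0)
    (hWb : ∀ i ∈ s, Wb i - 1 / p ≠ 0) :
    ContinuousAt (fun w => c₁ / w + c₂ + ∑ i ∈ s, e i / (Wb i - 1 / w)) p := by
  refine (continuousAt_const.div continuousAt_id hp).add continuousAt_const |>.add <|
    continuousAt_finsetSum_div (fun i _ => ?_) hWb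
  exact continuousAt_const.sub (continuousAt_const.div continuousAt_id hp)

theorem continuousAt_zbar_data {p : ℂ} (hp : p ≠ 0) (hWb : ∀ i ∈ s, p * Wb i ≠ 1)
    (hZbw : ∀ w, Zbw w = -r / w ^ 2 + ∑ i ∈ s, abar i / (w ^ 2 * (Wb i - 1 / w)))
    (hZbx : ∀ w, Zbx w = rx / w + ubarx + ∑ i ∈ s, abar i * Wbx i / (Wb i - 1 / w)) :
    ContinuousAt Zbw p ∧ ContinuousAt Zbx p ∧
      ContinuousAt (fun w => rt / w + ubart + ∑ i ∈ s, abar i * Wbt i / (Wb i - 1 / w)) p := by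
  have hWb' : ∀ i ∈ s, Wb i - 1 / p ≠ 0 := fun i hi h => hWb i hi <| by
    field_simp at h; linear_combination h
  refine ⟨?_, by rw [funext hZbx]; exact continuousAt_div_add_add_sum_div_sub_inv hp hWb',
    continuousAt_div_add_add_sum_div_sub_inv hp hWb'⟩
  rw [funext hZbw]
  refine (continuousAt_const.div (continuous_pow 2).continuousAt (pow_ne_zero 2 hp)).add <|
    continuousAt_finsetSum_div (fun _ _ => ?_) fun i hi =>
      mul_ne_zero (pow_ne_zero 2 hp) (hWb' i hi)
  exact (continuous_pow 2).continuousAt.mul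
    (continuousAt_const.sub (continuousAt_const.div continuousAt_id hp))

theorem tau_flow_F_continuousAt {p : ℂ} (hFw : ∀ w, Fw w = if j = 0 then r else (w - W j)⁻¹)
    (hFx : ∀ w, Fx w = if j = 0 then rx * w + ux / 2 else
      Wx j / (W j - w) + (1 / 2) * (rx / r - Wx j / W j)) (hj : j = 0 ∨ W j ≠ p) :
    ContinuousAt Fw p ∧ ContinuousAt Fx p := by
  rw [funext hFw, funext hFx]
  split_ifs with hj₀
  · exact ⟨continuousAt_const, by fun_prop⟩
  · have hp : p - W j ≠ 0 := sub_ne_zero.mpr (hj.resolve_left hj₀).symm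
    have hp' : W j - p ≠ 0 := sub_ne_zero.mpr (hj.resolve_left hj₀)
    exact ⟨(continuousAt_id.sub continuousAt_const).inv₀ hp,
      (continuousAt_const.div (continuousAt_const.sub continuousAt_id) hp').add continuousAt_const⟩

theorem tau_deriv_I_pole_eq {p pt : ℂ}
    (hZbw : ∀ w, Zbw w = -r / w ^ 2 + ∑ i ∈ s, abar i / (w ^ 2 * (Wb i - 1 / w))) :
    rt / p - r * pt / p ^ 2 + ubart + ∑ l ∈ s, abar l * (Wbt l + pt / p ^ 2) / (Wb l - 1 / p)
      = (rt / p + ubart + ∑ l ∈ s, abar l * Wbt l / (Wb l - 1 / p)) + pt * Zbw p := by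
  have hsplit : ∀ l ∈ s, abar l * (Wbt l + pt / p ^ 2) / (Wb l - 1 / p)
      = abar l * Wbt l / (Wb l - 1 / p) + pt * (abar l / (p ^ 2 * (Wb l - 1 / p))) :=
    fun l _ => by rw [← div_div]; ring
  rw [sum_congr rfl hsplit, sum_add_distrib, ← mul_sum, hZbw]
  ring

theorem tau_flow_I_pole (hk : k ∈ s) (hk₀ : k ≠ 0) (hj : j = 0 ∨ j ∈ s) (ha : a k ≠ 0)
    (hW : W k ≠ 0) (hWdist : ∀ i ∈ s, i ≠ k → W i ≠ W k) (hWWb : ∀ l ∈ s, W k * Wb l ≠ 1)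
    (hZw : ∀ w, Zw w = r + ∑ i ∈ s, a i / (w - W i))
    (hZx : ∀ w, Zx w = rx * w + ux + ∑ i ∈ s, a i * Wx i / (W i - w))
    (hZbw : ∀ w, Zbw w = -r / w ^ 2 + ∑ i ∈ s, abar i / (w ^ 2 * (Wb i - 1 / w)))
    (hZbx : ∀ w, Zbx w = rx / w + ubarx + ∑ i ∈ s, abar i * Wbx i / (Wb i - 1 / w))
    (hstring : ∀ w : ℂ, w ≠ 0 → (∀ i ∈ s, w ≠ W i) → (∀ i ∈ s, w ≠ (Wb i)⁻¹) →
      w * Zw w * Zbx w - w * Zx w * Zbw w = 1)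
    (hFw : ∀ w, Fw w = if j = 0 then r else (w - W j)⁻¹)
    (hFx : ∀ w, Fx w = if j = 0 then rx * w + ux / 2 else
      Wx j / (W j - w) + (1 / 2) * (rx / r - Wx j / W j))
    (hz : ∀ w : ℂ, w ≠ 0 → (∀ i ∈ s, w ≠ W i) → (∀ i ∈ s, w ≠ (Wb i)⁻¹) →
      rt * w + ut + ∑ i ∈ s, a i * Wt i / (W i - w) = w * Fw w * Zx w - w * Fx w * Zw w)
    (hzbar : ∀ w : ℂ, w ≠ 0 → (∀ i ∈ s, w ≠ W i) → (∀ i ∈ s, w ≠ (Wb i)⁻¹) →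
      rt / w + ubart + ∑ i ∈ s, abar i * Wbt i / (Wb i - 1 / w)
        = w * Fw w * Zbx w - w * Fx w * Zbw w) :
    a k * (rt / W k - r * Wt k / W k ^ 2 + ubart
      + ∑ l ∈ s, abar l * (Wbt l + Wt k / W k ^ 2) / (Wb l - 1 / W k))
      = if j = k then 1 else 0 := by
  set A := fun w => r + ∑ i ∈ s.erase k, a i / (w - W i)
  set B := fun w => rx * w + ux + ∑ i ∈ s.erase k, a i * Wx i / (W i - w)
  set L := fun w => rt * w + ut + ∑ i ∈ s.erase k, a i * Wt i / (W i - w)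
  set Λ := fun w : ℂ => rt / w + ubart + ∑ i ∈ s, abar i * Wbt i / (Wb i - 1 / w)
  have hWne : ∀ i ∈ s.erase k, W i - W k ≠ 0 := fun i hi =>
    sub_ne_zero.mpr (hWdist i (mem_of_mem_erase hi) (ne_of_mem_erase hi))
  have hA : ContinuousAt A (W k) := continuousAt_const.add <|
    continuousAt_finsetSum_div (fun _ _ => by fun_prop) fun i hi h =>
      hWne i hi (by linear_combination -h)
  have hB : ContinuousAt B (W k) := continuousAt_linear_add_sum_div_sub hWne
  have hL : ContinuousAt L (W k) := continuousAt_linear_add_sum_div_sub hWne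
  obtain ⟨hZbw', hZbx', hΛ⟩ := continuousAt_zbar_data (rt := rt) (ubart := ubart) (Wbt := Wbt)
    hW hWWb hZbw hZbx
  have hadm := eventually_nhdsNE_admissible s W Wb (W k)
  have hZw' : ∀ w, Zw w = a k / (w - W k) + A w := fun w => by
    rw [hZw, ← add_sum_erase s _ hk]; ring
  have hZx' : ∀ w, Zx w = a k * Wx k / (W k - w) + B w := fun w => by
    rw [hZx, ← add_sum_erase s _ hk]; ring
  have hstring' : ∀ᶠ w in 𝓝[≠] W k,
      w * (a k / (w - W k) + A w) * Zbx w - w * (a k * Wx k / (W k - w) + B w) * Zbw w = 1 :=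
    hadm.mono fun w ⟨h₀, h₁, h₂⟩ => by rw [← hZw', ← hZx']; exact hstring w h₀ h₁ h₂
  have hz' : ∀ᶠ w in 𝓝[≠] W k, a k * Wt k / (W k - w) + L w =
      w * Fw w * (a k * Wx k / (W k - w) + B w) - w * Fx w * (a k / (w - W k) + A w) :=
    hadm.mono fun w ⟨h₀, h₁, h₂⟩ => by
      rw [← hZw', ← hZx', ← hz w h₀ h₁ h₂, ← add_sum_erase s _ hk]; ring
  have hzbar' : ∀ᶠ w in 𝓝[≠] W k, Λ w = w * Fw w * Zbx w - w * Fx w * Zbw w :=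
    hadm.mono fun w ⟨h₀, h₁, h₂⟩ => hzbar w h₀ h₁ h₂
  rw [tau_deriv_I_pole_eq hZbw]
  rcases eq_or_ne j k with rfl | hjk
  · have hF : ∀ w, Fw w = (w - W j)⁻¹ ∧
        Fx w = Wx j / (W j - w) + 1 / 2 * (rx / r - Wx j / W j) := fun w => by
      rw [hFw, hFx, if_neg hk₀, if_neg hk₀]; exact ⟨rfl, rfl⟩
    rw [if_pos rfl]
    exact tau_flow_at_pole_self ha hW hA hB hL hZbw' hZbx' hΛ hstring'
      (hz'.mono fun w h => by rwa [(hF w).1, (hF w).2] at h)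
      (hzbar'.mono fun w h => by rwa [(hF w).1, (hF w).2] at h)
  · obtain ⟨hFw', hFx'⟩ := tau_flow_F_continuousAt hFw hFx <|
      hj.imp_right fun hj => hWdist j hj hjk
    rw [if_neg hjk]
    exact tau_flow_at_pole_of_continuousAt hFw' hFx' hA hB hL hZbw' hZbx' hΛ hstring' hz' hzbar'

end Pointwise

theorem tau_flow_linearizing_variables_I_general
    (n : ℕ) (a abar : ℕ → ℂ)
    (r : ℝ → ℝ → ℂ) (W Wb : ℕ → ℝ → ℝ → ℂ)
    -- ∂/∂x and ∂/∂t of the data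
    (rx ux ubarx rt ut ubart : ℝ → ℝ → ℂ) (Wx Wbx Wt Wbt : ℕ → ℝ → ℝ → ℂ)
    (ha : ∀ i ∈ Finset.Icc 1 (n + 1), a i ≠ 0)
    (hr0 : ∀ x t : ℝ, r x t ≠ 0)
    (hW0 : ∀ i ∈ Finset.Icc 1 (n + 1), ∀ x t : ℝ, W i x t ≠ 0)
    (hWb0 : ∀ i ∈ Finset.Icc 1 (n + 1), ∀ x t : ℝ, Wb i x t ≠ 0)
    (hWdist : ∀ i ∈ Finset.Icc 1 (n + 1), ∀ j ∈ Finset.Icc 1 (n + 1), i ≠ j →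
      ∀ x t : ℝ, W i x t ≠ W j x t)
    (hWWb : ∀ i ∈ Finset.Icc 1 (n + 1), ∀ j ∈ Finset.Icc 1 (n + 1),
      ∀ x t : ℝ, W i x t * Wb j x t ≠ 1)
    -- the rational (in w) partial derivatives of z and z̄
    (Zw Zx Zbw Zbx : ℝ → ℝ → ℂ → ℂ)
    (hZw : ∀ x t w, Zw x t w = r x t + ∑ i ∈ Finset.Icc 1 (n + 1), a i / (w - W i x t))
    (hZx : ∀ x t w, Zx x t w =
      rx x t * w + ux x t + ∑ i ∈ Finset.Icc 1 (n + 1), a i * Wx i x t / (W i x t - w))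
    (hZbw : ∀ x t w, Zbw x t w =
      - r x t / w ^ 2 + ∑ i ∈ Finset.Icc 1 (n + 1), abar i / (w ^ 2 * (Wb i x t - 1 / w)))
    (hZbx : ∀ x t w, Zbx x t w =
      rx x t / w + ubarx x t
        + ∑ i ∈ Finset.Icc 1 (n + 1), abar i * Wbx i x t / (Wb i x t - 1 / w))
    -- the string equation
    (hstring : ∀ (x t : ℝ) (w : ℂ), w ≠ 0 → (∀ j ∈ Finset.Icc 1 (n + 1), w ≠ W j x t) →
      (∀ j ∈ Finset.Icc 1 (n + 1), w ≠ (Wb j x t)⁻¹) →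
      w * Zw x t w * Zbx x t w - w * Zx x t w * Zbw x t w = 1)
    -- the fixed index j and the derivatives F^j of the evolution function 𝓗_j
    (j : ℕ) (hj : j ≤ n + 1)
    (Fw Fx : ℝ → ℝ → ℂ → ℂ)
    (hFw : ∀ x t w, Fw x t w = if j = 0 then r x t else (w - W j x t)⁻¹)
    (hFx : ∀ x t w, Fx x t w = if j = 0 then rx x t * w + ux x t / 2 else
      Wx j x t / (W j x t - w) + (1 / 2) * (rx x t / r x t - Wx j x t / W j x t))
    -- the τ_j-flow equations for z and z̄
    (hflowz : ∀ (x t : ℝ) (w : ℂ), w ≠ 0 → (∀ i ∈ Finset.Icc 1 (n + 1), w ≠ W i x t) →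
      (∀ i ∈ Finset.Icc 1 (n + 1), w ≠ (Wb i x t)⁻¹) →
      rt x t * w + ut x t + ∑ i ∈ Finset.Icc 1 (n + 1), a i * Wt i x t / (W i x t - w)
        = w * Fw x t w * Zx x t w - w * Fx x t w * Zw x t w)
    (hflowzbar : ∀ (x t : ℝ) (w : ℂ), w ≠ 0 → (∀ i ∈ Finset.Icc 1 (n + 1), w ≠ W i x t) →
      (∀ i ∈ Finset.Icc 1 (n + 1), w ≠ (Wb i x t)⁻¹) →
      rt x t / w + ubart x t
          + ∑ i ∈ Finset.Icc 1 (n + 1), abar i * Wbt i x t / (Wb i x t - 1 / w)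
        = w * Fw x t w * Zbx x t w - w * Fx x t w * Zbw x t w) :
    ∀ x t : ℝ,
      (ubart x t + ∑ l ∈ Finset.Icc 1 (n + 1), abar l * Wbt l x t / Wb l x t
        = if j = 0 then 1 else 0) ∧
      ∀ k ∈ Finset.Icc 1 (n + 1),
        a k * (rt x t / W k x t - r x t * Wt k x t / (W k x t) ^ 2 + ubart x t
          + ∑ l ∈ Finset.Icc 1 (n + 1),
              abar l * (Wbt l x t + Wt k x t / (W k x t) ^ 2) / (Wb l x t - 1 / W k x t))
          = if j = k then 1 else 0 := by
  intro x t
  refine ⟨tau_flow_I_zero (s := Icc 1 (n + 1)) (W := (W · x t)) (Wb := (Wb · x t))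
    (Wx := (Wx · x t)) (Wbx := (Wbx · x t)) (Wbt := (Wbt · x t)) (hr0 x t)
    (fun i hi => hWb0 i hi x t) (hZw x t) (hZx x t) (hZbw x t) (hZbx x t) (hstring x t)
    (hFw x t) (hFx x t) (hflowzbar x t), fun k hk => ?_⟩
  have hk₀ : k ≠ 0 := by rw [mem_Icc] at hk; omega
  have hj' : j = 0 ∨ j ∈ Icc 1 (n + 1) := by rw [mem_Icc]; omega
  exact tau_flow_I_pole (W := (W · x t)) (Wb := (Wb · x t)) (Wx := (Wx · x t))
    (Wbx := (Wbx · x t)) (Wt := (Wt · x t)) (Wbt := (Wbt · x t)) hk hk₀ hj' (ha k hk)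
    (hW0 k hk x t) (fun i hi hik => hWdist i hi k hk hik x t) (fun l hl => hWWb k hk l hl x t)
    (hZw x t) (hZx x t) (hZbw x t) (hZbx x t) (hstring x t) (hFw x t) (hFx x t) (hflowz x t)
    (hflowzbar x t)

/-- for the logarithmic reduction evolving under the `τ_j`-flow and
constrained by the string equation, the linearizing variables
`I₀ = ū + Σ ā_l log w̄_l` and `I_k = a_k·z̄(1/w_k)` satisfy `∂_{τ_j} I_k = δ_{jk}`. -/
theorem tau_flow_linearizing_variables_I
    (n : ℕ) (a abar : ℕ → ℂ)
    (r u ubar : ℝ → ℝ → ℂ) (W Wb : ℕ → ℝ → ℝ → ℂ)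
    -- ∂/∂x and ∂/∂t of the data
    (rx ux ubarx rt ut ubart : ℝ → ℝ → ℂ) (Wx Wbx Wt Wbt : ℕ → ℝ → ℝ → ℂ)
    (ha : ∀ i ∈ Finset.Icc 1 (n + 1), a i ≠ 0)
    (habar : ∀ i ∈ Finset.Icc 1 (n + 1), abar i ≠ 0)
    (hasum : ∑ i ∈ Finset.Icc 1 (n + 1), a i = 0)
    (habarsum : ∑ i ∈ Finset.Icc 1 (n + 1), abar i = 0)
    (hr0 : ∀ x t : ℝ, r x t ≠ 0)
    (hW0 : ∀ i ∈ Finset.Icc 1 (n + 1), ∀ x t : ℝ, W i x t ≠ 0)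
    (hWb0 : ∀ i ∈ Finset.Icc 1 (n + 1), ∀ x t : ℝ, Wb i x t ≠ 0)
    (hWdist : ∀ i ∈ Finset.Icc 1 (n + 1), ∀ j ∈ Finset.Icc 1 (n + 1), i ≠ j →
      ∀ x t : ℝ, W i x t ≠ W j x t)
    (hWbdist : ∀ i ∈ Finset.Icc 1 (n + 1), ∀ j ∈ Finset.Icc 1 (n + 1), i ≠ j →
      ∀ x t : ℝ, Wb i x t ≠ Wb j x t)
    (hWWb : ∀ i ∈ Finset.Icc 1 (n + 1), ∀ j ∈ Finset.Icc 1 (n + 1),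
      ∀ x t : ℝ, W i x t * Wb j x t ≠ 1)
    (hdrx : ∀ x t, HasDerivAt (fun y => r y t) (rx x t) x)
    (hdrt : ∀ x t, HasDerivAt (fun s => r x s) (rt x t) t)
    (hdux : ∀ x t, HasDerivAt (fun y => u y t) (ux x t) x)
    (hdut : ∀ x t, HasDerivAt (fun s => u x s) (ut x t) t)
    (hdubarx : ∀ x t, HasDerivAt (fun y => ubar y t) (ubarx x t) x)
    (hdubart : ∀ x t, HasDerivAt (fun s => ubar x s) (ubart x t) t)
    (hdWx : ∀ i ∈ Finset.Icc 1 (n + 1), ∀ x t, HasDerivAt (fun y => W i y t) (Wx i x t) x)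
    (hdWt : ∀ i ∈ Finset.Icc 1 (n + 1), ∀ x t, HasDerivAt (fun s => W i x s) (Wt i x t) t)
    (hdWbx : ∀ i ∈ Finset.Icc 1 (n + 1), ∀ x t, HasDerivAt (fun y => Wb i y t) (Wbx i x t) x)
    (hdWbt : ∀ i ∈ Finset.Icc 1 (n + 1), ∀ x t, HasDerivAt (fun s => Wb i x s) (Wbt i x t) t)
    -- the rational (in w) partial derivatives of z and z̄
    (Zw Zx Zbw Zbx : ℝ → ℝ → ℂ → ℂ)
    (hZw : ∀ x t w, Zw x t w = r x t + ∑ i ∈ Finset.Icc 1 (n + 1), a i / (w - W i x t))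
    (hZx : ∀ x t w, Zx x t w =
      rx x t * w + ux x t + ∑ i ∈ Finset.Icc 1 (n + 1), a i * Wx i x t / (W i x t - w))
    (hZbw : ∀ x t w, Zbw x t w =
      - r x t / w ^ 2 + ∑ i ∈ Finset.Icc 1 (n + 1), abar i / (w ^ 2 * (Wb i x t - 1 / w)))
    (hZbx : ∀ x t w, Zbx x t w =
      rx x t / w + ubarx x t
        + ∑ i ∈ Finset.Icc 1 (n + 1), abar i * Wbx i x t / (Wb i x t - 1 / w))
    -- the string equation
    (hstring : ∀ (x t : ℝ) (w : ℂ), w ≠ 0 → (∀ j ∈ Finset.Icc 1 (n + 1), w ≠ W j x t) →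
      (∀ j ∈ Finset.Icc 1 (n + 1), w ≠ (Wb j x t)⁻¹) →
      w * Zw x t w * Zbx x t w - w * Zx x t w * Zbw x t w = 1)
    -- the fixed index j and the derivatives F^j of the evolution function 𝓗_j
    (j : ℕ) (hj : j ≤ n + 1)
    (Fw Fx : ℝ → ℝ → ℂ → ℂ)
    (hFw : ∀ x t w, Fw x t w = if j = 0 then r x t else (w - W j x t)⁻¹)
    (hFx : ∀ x t w, Fx x t w = if j = 0 then rx x t * w + ux x t / 2 else
      Wx j x t / (W j x t - w) + (1 / 2) * (rx x t / r x t - Wx j x t / W j x t))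
    -- the τ_j-flow equations for z and z̄
    (hflowz : ∀ (x t : ℝ) (w : ℂ), w ≠ 0 → (∀ i ∈ Finset.Icc 1 (n + 1), w ≠ W i x t) →
      (∀ i ∈ Finset.Icc 1 (n + 1), w ≠ (Wb i x t)⁻¹) →
      rt x t * w + ut x t + ∑ i ∈ Finset.Icc 1 (n + 1), a i * Wt i x t / (W i x t - w)
        = w * Fw x t w * Zx x t w - w * Fx x t w * Zw x t w)
    (hflowzbar : ∀ (x t : ℝ) (w : ℂ), w ≠ 0 → (∀ i ∈ Finset.Icc 1 (n + 1), w ≠ W i x t) →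
      (∀ i ∈ Finset.Icc 1 (n + 1), w ≠ (Wb i x t)⁻¹) →
      rt x t / w + ubart x t
          + ∑ i ∈ Finset.Icc 1 (n + 1), abar i * Wbt i x t / (Wb i x t - 1 / w)
        = w * Fw x t w * Zbx x t w - w * Fx x t w * Zbw x t w) :
    ∀ x t : ℝ,
      (ubart x t + ∑ l ∈ Finset.Icc 1 (n + 1), abar l * Wbt l x t / Wb l x t
        = if j = 0 then 1 else 0) ∧
      ∀ k ∈ Finset.Icc 1 (n + 1),
        a k * (rt x t / W k x t - r x t * Wt k x t / (W k x t) ^ 2 + ubart x t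
          + ∑ l ∈ Finset.Icc 1 (n + 1),
              abar l * (Wbt l x t + Wt k x t / (W k x t) ^ 2) / (Wb l x t - 1 / W k x t))
          = if j = k then 1 else 0 :=
  tau_flow_linearizing_variables_I_general n a abar r W Wb rx ux ubarx rt ut ubart Wx Wbx Wt Wbt ha
    hr0 hW0 hWb0 hWdist hWWb Zw Zx Zbw Zbx hZw hZx hZbw hZbx hstring j hj Fw Fx hFw hFx hflowz
    hflowzbar
end

section
/- Let A be a commutative ℚ-algebra with a derivation d : A → A, and let D : A → A be another derivation, both extended coefficientwise to A[w,w⁻¹]. Suppose z, z̄, H ∈ A[w,w⁻¹] satisfy the string equation {z, z̄} = 1 and the flow equations D z = {H, z}, D z̄ = {H, z̄} (brackets taken with respect to d). Define Q := (1/2)·( c₋₁(z̄·∂_w z) − c₋₁(z·∂_w z̄) ) ∈ A. Then D(Q) = 0; i.e., the Casimir Q is conserved by every 2dToda flow constrained by the string equation. -/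
/-!
Along the flow, the Leibniz rules for `D` and `∂_w` together with the identity
`∂_w z · {H,z̄} - ∂_w z̄ · {H,z} = ∂_w H · {z,z̄}` give
`D (z̄ ∂_w z - z ∂_w z̄) = ∂_w (z̄ {H,z} - z {H,z̄}) + 2 ∂_w H · {z,z̄}`.
The string equation turns the right-hand side into the total derivative
`∂_w (z̄ {H,z} - z {H,z̄} + 2H)`, and `D` commutes with taking residues while
residues of total derivatives vanish.
-/

open LaurentPolynomial

/-- The derivation `d : A → A` extended coefficientwise to Laurent polynomials
(so that `d w = 0`). -/
noncomputable def dmap {A : Type*} [CommRing A] (d : A → A) (f : LaurentPolynomial A) :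
    LaurentPolynomial A :=
  f.coeff.sum fun n a => C (d a) * T n

/-- The formal derivative `∂_w` on Laurent polynomials. -/
noncomputable def wderiv {A : Type*} [CommRing A] (f : LaurentPolynomial A) :
    LaurentPolynomial A :=
  f.coeff.sum fun n a => C (n • a) * T (n - 1)

/-- The Lax–Poisson bracket `{f,g} = w·(∂_w f)·(d g) − w·(d f)·(∂_w g)`. -/
noncomputable def lax {A : Type*} [CommRing A] (d : A → A) (f g : LaurentPolynomial A) :
    LaurentPolynomial A :=
  T 1 * wderiv f * dmap d g - T 1 * dmap d f * wderiv g

section LaurentDerivations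

variable {A : Type*} [CommRing A]

lemma coeff_dmap {δ : A → A} (h0 : δ 0 = 0) (f : A[T;T⁻¹]) (m : ℤ) :
    (dmap δ f).coeff m = δ (f.coeff m) := by
  simp only [dmap, ← single_eq_C_mul_T, AddMonoidAlgebra.coeff_finsuppSum, Finsupp.sum_apply,
    AddMonoidAlgebra.coeff_single, Finsupp.single_apply]
  rw [Finsupp.sum, Finset.sum_ite_eq']
  split_ifs with h
  · rfl
  · rw [Finsupp.notMem_support_iff.mp h, h0]

lemma coeff_wderiv (f : A[T;T⁻¹]) (m : ℤ) :
    (wderiv f).coeff m = (m + 1) • f.coeff (m + 1) := by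
  simp only [wderiv, ← single_eq_C_mul_T, AddMonoidAlgebra.coeff_finsuppSum, Finsupp.sum_apply,
    AddMonoidAlgebra.coeff_single, Finsupp.single_apply, sub_eq_iff_eq_add]
  rw [Finsupp.sum, Finset.sum_ite_eq']
  split_ifs with h
  · rfl
  · rw [Finsupp.notMem_support_iff.mp h, smul_zero]

lemma coeff_wderiv_neg_one (f : A[T;T⁻¹]) : (wderiv f).coeff (-1) = 0 := by
  simp [coeff_wderiv]

lemma dmap_C_mul_T {δ : A → A} (h0 : δ 0 = 0) (a : A) (n : ℤ) :
    dmap δ (C a * T n) = C (δ a) * T n := by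
  rw [dmap, ← single_eq_C_mul_T, AddMonoidAlgebra.coeff_single, Finsupp.sum_single_index]
  simp [h0]

lemma wderiv_C_mul_T (a : A) (n : ℤ) : wderiv (C a * T n) = C (n • a) * T (n - 1) := by
  rw [wderiv, ← single_eq_C_mul_T, AddMonoidAlgebra.coeff_single, Finsupp.sum_single_index]
  simp

lemma dmap_add {δ : A → A} (hadd : ∀ a b, δ (a + b) = δ a + δ b) (f g : A[T;T⁻¹]) :
    dmap δ (f + g) = dmap δ f + dmap δ g := by
  have h0 : δ 0 = 0 := (AddMonoidHom.mk' δ hadd).map_zero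
  ext m
  simp [coeff_dmap h0, hadd]

lemma dmap_sub {δ : A → A} (hadd : ∀ a b, δ (a + b) = δ a + δ b) (f g : A[T;T⁻¹]) :
    dmap δ (f - g) = dmap δ f - dmap δ g :=
  (AddMonoidHom.mk' (dmap δ) (dmap_add hadd)).map_sub f g

lemma wderiv_add (f g : A[T;T⁻¹]) : wderiv (f + g) = wderiv f + wderiv g := by
  ext m
  simp [coeff_wderiv, smul_add]

lemma wderiv_sub (f g : A[T;T⁻¹]) : wderiv (f - g) = wderiv f - wderiv g :=
  (AddMonoidHom.mk' wderiv wderiv_add).map_sub f g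

lemma dmap_wderiv {δ : A → A} (hadd : ∀ a b, δ (a + b) = δ a + δ b) (f : A[T;T⁻¹]) :
    dmap δ (wderiv f) = wderiv (dmap δ f) := by
  have h0 : δ 0 = 0 := (AddMonoidHom.mk' δ hadd).map_zero
  ext m
  simp only [coeff_dmap h0, coeff_wderiv]
  exact (AddMonoidHom.mk' δ hadd).map_zsmul _ _

lemma leibniz_of_C_mul_T {φ : A[T;T⁻¹] → A[T;T⁻¹]}
    (hadd : ∀ f g, φ (f + g) = φ f + φ g)
    (hmono : ∀ (a b : A) (n m : ℤ), φ (C a * T n * (C b * T m)) =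
      C a * T n * φ (C b * T m) + φ (C a * T n) * (C b * T m))
    (f g : A[T;T⁻¹]) : φ (f * g) = f * φ g + φ f * g := by
  induction f using LaurentPolynomial.induction_on' with
  | add p q hp hq => rw [add_mul, hadd, hp, hq, hadd]; ring
  | C_mul_T n a =>
    induction g using LaurentPolynomial.induction_on' with
    | add p q hp hq => rw [mul_add, hadd, hp, hq, hadd]; ring
    | C_mul_T m b => exact hmono a b n m

lemma C_mul_T_mul_C_mul_T (a b : A) (n m : ℤ) :
    C a * T n * (C b * T m) = C (a * b) * T (n + m) := by
  rw [map_mul, T_add]; ring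

lemma wderiv_mul (f g : A[T;T⁻¹]) : wderiv (f * g) = f * wderiv g + wderiv f * g := by
  refine leibniz_of_C_mul_T wderiv_add (fun a b n m => ?_) f g
  rw [C_mul_T_mul_C_mul_T, wderiv_C_mul_T, wderiv_C_mul_T, wderiv_C_mul_T, C_mul_T_mul_C_mul_T,
    C_mul_T_mul_C_mul_T, show n + (m - 1) = n + m - 1 by ring, show n - 1 + m = n + m - 1 by ring,
    ← add_mul, ← map_add, add_smul, smul_mul_assoc, mul_smul_comm, add_comm]

lemma dmap_mul {δ : A → A} (hadd : ∀ a b, δ (a + b) = δ a + δ b)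
    (hmul : ∀ a b, δ (a * b) = a * δ b + δ a * b) (f g : A[T;T⁻¹]) :
    dmap δ (f * g) = f * dmap δ g + dmap δ f * g := by
  have h0 : δ 0 = 0 := (AddMonoidHom.mk' δ hadd).map_zero
  refine leibniz_of_C_mul_T (dmap_add hadd) (fun a b n m => ?_) f g
  rw [C_mul_T_mul_C_mul_T, dmap_C_mul_T h0, dmap_C_mul_T h0, dmap_C_mul_T h0, hmul, map_add,
    T_add, map_mul, map_mul]
  ring

lemma dmap_mul_wderiv_sub_mul_wderiv {δ : A → A} (hadd : ∀ a b, δ (a + b) = δ a + δ b)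
    (hmul : ∀ a b, δ (a * b) = a * δ b + δ a * b) (f g : A[T;T⁻¹]) :
    dmap δ (g * wderiv f - f * wderiv g) =
      g * wderiv (dmap δ f) + dmap δ g * wderiv f -
        (f * wderiv (dmap δ g) + dmap δ f * wderiv g) := by
  rw [dmap_sub hadd, dmap_mul hadd hmul, dmap_mul hadd hmul, dmap_wderiv hadd, dmap_wderiv hadd]

lemma wderiv_mul_lax_sub_wderiv_mul_lax (d : A → A) (f g H : A[T;T⁻¹]) :
    wderiv f * lax d H g - wderiv g * lax d H f = wderiv H * lax d f g := by
  unfold lax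
  ring

lemma mul_wderiv_lax_sub_mul_wderiv_lax (d : A → A) (f g H : A[T;T⁻¹]) :
    g * wderiv (lax d H f) + lax d H g * wderiv f - (f * wderiv (lax d H g) + lax d H f * wderiv g)
      = wderiv (g * lax d H f - f * lax d H g) + 2 * (wderiv H * lax d f g) := by
  rw [← wderiv_mul_lax_sub_wderiv_mul_lax, wderiv_sub, wderiv_mul, wderiv_mul]
  ring

lemma dmap_mul_wderiv_sub_mul_wderiv_eq_wderiv {d δ : A → A}
    (hadd : ∀ a b, δ (a + b) = δ a + δ b) (hmul : ∀ a b, δ (a * b) = a * δ b + δ a * b)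
    {f g H : A[T;T⁻¹]} (hstring : lax d f g = 1) (hflow_f : dmap δ f = lax d H f)
    (hflow_g : dmap δ g = lax d H g) :
    dmap δ (g * wderiv f - f * wderiv g) = wderiv (g * lax d H f - f * lax d H g + (H + H)) := by
  rw [dmap_mul_wderiv_sub_mul_wderiv hadd hmul, hflow_f, hflow_g,
    mul_wderiv_lax_sub_mul_wderiv_lax, hstring, wderiv_add, wderiv_add]
  ring

end LaurentDerivations

theorem casimir_conserved_general {A : Type*} [CommRing A] [Algebra ℚ A]
    (d D : A → A)
    (hD_add : ∀ a b : A, D (a + b) = D a + D b)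
    (hD_mul : ∀ a b : A, D (a * b) = a * D b + D a * b)
    (z zbar H : LaurentPolynomial A)
    (hstring : lax d z zbar = 1)
    (hflow_z : dmap D z = lax d H z)
    (hflow_zbar : dmap D zbar = lax d H zbar)
    (Q : A)
    (hQ : Q = (1/2 : ℚ) • ((zbar * wderiv z).coeff (-1 : ℤ) - (z * wderiv zbar).coeff (-1 : ℤ))) :
    D Q = 0 := by
  let D' : A →+ A := AddMonoidHom.mk' D hD_add
  have hres : D ((zbar * wderiv z - z * wderiv zbar).coeff (-1)) = 0 := by
    rw [← coeff_dmap (show D 0 = 0 from D'.map_zero),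
      dmap_mul_wderiv_sub_mul_wderiv_eq_wderiv hD_add hD_mul hstring hflow_z hflow_zbar,
      coeff_wderiv_neg_one]
  rw [hQ, ← Finsupp.sub_apply, ← AddMonoidAlgebra.coeff_sub]
  exact (map_rat_smul D' _ _).trans (by rw [AddMonoidHom.mk'_apply, hres, smul_zero])

/-- the Casimir `Q = (1/2)(c₋₁(z̄·∂_w z) − c₋₁(z·∂_w z̄))` is conserved
by every 2dToda flow `D z = {H,z}`, `D z̄ = {H,z̄}` constrained by the string
equation `{z,z̄} = 1`.  Here `c₋₁` is the `w⁻¹`-coefficient (formal residue). -/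
theorem casimir_conserved {A : Type*} [CommRing A] [Algebra ℚ A]
    (d D : A → A)
    (hd_add : ∀ a b : A, d (a + b) = d a + d b)
    (hd_mul : ∀ a b : A, d (a * b) = a * d b + d a * b)
    (hD_add : ∀ a b : A, D (a + b) = D a + D b)
    (hD_mul : ∀ a b : A, D (a * b) = a * D b + D a * b)
    (z zbar H : LaurentPolynomial A)
    (hstring : lax d z zbar = 1)
    (hflow_z : dmap D z = lax d H z)
    (hflow_zbar : dmap D zbar = lax d H zbar)
    (Q : A)
    (hQ : Q = (1/2 : ℚ) • ((zbar * wderiv z).coeff (-1 : ℤ) - (z * wderiv zbar).coeff (-1 : ℤ))) :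
    D Q = 0 :=
  casimir_conserved_general d D hD_add hD_mul z zbar H hstring hflow_z hflow_zbar Q hQ
end

section
/- If the string equation holds, then for every x and every k ∈ {1,…,n+1}: a_k·[ r′/w_k − r·w_k′/w_k² + ū′ + Σ_l ā_l·(w̄_l′ + w_k′/w_k²)/(w̄_l − 1/w_k) ] = 0 and ā_k·[ r′/w̄_k − r·w̄_k′/w̄_k² + u′ + Σ_l a_l·(w_l′ + w̄_k′/w̄_k²)/(w_l − 1/w̄_k) ] = 0. (That is, the quantities I_k = a_k·z̄(1/w_k) and Ī_k = ā_k·z(1/w̄_k) are integrals of the string equation: dI_k/dx = dĪ_k/dx = 0.) -/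
/-!
Near a pole `w₀ = w_k` of `Z_w` and `Z_x`, multiply the string equation by `w - w₀` and let
`w → w₀`. The right-hand side tends to `0`; on the left `Z_w` and `Z_x` contribute their
residues `a_k` and `-a_k w_k'`, while `w Z̄_x` and `w Z̄_w` are regular at `w₀`, so the limit is
`w_k a_k (Z̄_x + w_k' Z̄_w)(w_k) = w_k · dI_k/dx`. The substitution `w ↦ 1/w` exchanges the
roles of `z` and `z̄` and preserves the string equation, which turns the statement for `Ī_k`
into the one for `I_k`.
-/

open Filter Topology

section Residue

variable {𝕜 : Type*} [NontriviallyNormedField 𝕜]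

/-- This is the residue of `f` at `p` when `f` has at most a simple pole there. -/
def HasSimpleResidueAt (f : 𝕜 → 𝕜) (p c : 𝕜) : Prop :=
  Tendsto (fun w => (w - p) * f w) (𝓝[≠] p) (𝓝 c)

variable {f g : 𝕜 → 𝕜} {p c d : 𝕜}

theorem HasSimpleResidueAt.unique (hc : HasSimpleResidueAt f p c)
    (hd : HasSimpleResidueAt f p d) : c = d :=
  tendsto_nhds_unique hc hd

theorem HasSimpleResidueAt.congr (hf : HasSimpleResidueAt f p c) (hfg : f =ᶠ[𝓝[≠] p] g) :
    HasSimpleResidueAt g p c :=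
  hf.congr' (hfg.mono fun w hw => by rw [hw])

theorem ContinuousAt.hasSimpleResidueAt_zero (hf : ContinuousAt f p) :
    HasSimpleResidueAt f p 0 := by
  have h : ContinuousAt (fun w => (w - p) * f w) p := by fun_prop
  simpa [HasSimpleResidueAt] using h.tendsto.mono_left nhdsWithin_le_nhds

theorem hasSimpleResidueAt_div_sub (c p : 𝕜) :
    HasSimpleResidueAt (fun w => c / (w - p)) p c :=
  tendsto_const_nhds.congr' <| eventually_nhdsWithin_of_forall fun _ hw =>
    (mul_div_cancel₀ c (sub_ne_zero.2 hw)).symm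

theorem HasSimpleResidueAt.add (hf : HasSimpleResidueAt f p c)
    (hg : HasSimpleResidueAt g p d) : HasSimpleResidueAt (fun w => f w + g w) p (c + d) := by
  simpa only [HasSimpleResidueAt, mul_add] using Tendsto.add hf hg

theorem HasSimpleResidueAt.sub (hf : HasSimpleResidueAt f p c)
    (hg : HasSimpleResidueAt g p d) : HasSimpleResidueAt (fun w => f w - g w) p (c - d) := by
  simpa only [HasSimpleResidueAt, mul_sub] using Tendsto.sub hf hg

theorem HasSimpleResidueAt.mul_continuousAt (hf : HasSimpleResidueAt f p c)
    (hg : ContinuousAt g p) : HasSimpleResidueAt (fun w => f w * g w) p (c * g p) := by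
  simpa only [HasSimpleResidueAt, mul_assoc] using
    Tendsto.mul hf (hg.tendsto.mono_left nhdsWithin_le_nhds)

theorem HasSimpleResidueAt.finsetSum {ι : Type*} {s : Finset ι} {f : ι → 𝕜 → 𝕜}
    {c : ι → 𝕜} (hf : ∀ i ∈ s, HasSimpleResidueAt (f i) p (c i)) :
    HasSimpleResidueAt (fun w => ∑ i ∈ s, f i w) p (∑ i ∈ s, c i) := by
  simpa only [HasSimpleResidueAt, Finset.mul_sum] using tendsto_finsetSum s hf

theorem hasSimpleResidueAt_sum_div_sub {ι : Type*} [DecidableEq ι] {s : Finset ι} {k : ι}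
    (c q : ι → 𝕜) (hk : k ∈ s) (hq : ∀ i ∈ s, i ≠ k → q i ≠ q k) :
    HasSimpleResidueAt (fun w => ∑ i ∈ s, c i / (w - q i)) (q k) (c k) := by
  have h := HasSimpleResidueAt.finsetSum (s := s) (f := fun i w => c i / (w - q i))
    (c := fun i => if i = k then c k else 0) (p := q k) fun i hi => by
      split_ifs with hik
      · subst hik; exact hasSimpleResidueAt_div_sub _ _
      · refine ContinuousAt.hasSimpleResidueAt_zero ?_
        exact continuousAt_const.div (continuousAt_id.sub continuousAt_const)
          (sub_ne_zero.2 (hq i hi hik).symm)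
  simpa [Finset.sum_ite_eq', hk] using h

end Residue

theorem eventually_nhdsNE_forall_ne {X ι : Type*} [TopologicalSpace X] [T1Space X]
    (p : X) (s : Finset ι) (q : ι → X) : ∀ᶠ w in 𝓝[≠] p, ∀ j ∈ s, w ≠ q j := by
  rw [eventually_all_finset]
  intro j _
  rcases eq_or_ne p (q j) with h | h
  · rw [← h]; exact self_mem_nhdsWithin
  · exact eventually_ne_nhdsWithin h

/-- The reduction data frozen at one `x`; the `d`-fields stand for `x`-derivatives, and `u`, `ū`
enter only through theirs. -/
structure LogReductionData (ι : Type*) where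
  r : ℂ
  dr : ℂ
  du : ℂ
  dubar : ℂ
  a : ι → ℂ
  abar : ι → ℂ
  w : ι → ℂ
  dw : ι → ℂ
  wbar : ι → ℂ
  dwbar : ι → ℂ

namespace LogReductionData

noncomputable section

variable {ι : Type*} (D : LogReductionData ι) (s : Finset ι)

def Zw (w : ℂ) : ℂ := D.r + ∑ i ∈ s, D.a i / (w - D.w i)

def Zx (w : ℂ) : ℂ := D.dr * w + D.du + ∑ i ∈ s, D.a i * D.dw i / (D.w i - w)

def Zbw (w : ℂ) : ℂ := -D.r / w ^ 2 + ∑ i ∈ s, D.abar i / (w ^ 2 * (D.wbar i - 1 / w))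

def Zbx (w : ℂ) : ℂ :=
  D.dr / w + D.dubar + ∑ i ∈ s, D.abar i * D.dwbar i / (D.wbar i - 1 / w)

def stringLHS (w : ℂ) : ℂ := w * D.Zw s w * D.Zbx s w - w * D.Zx s w * D.Zbw s w

def StringEquation : Prop :=
  ∀ w : ℂ, w ≠ 0 → (∀ j ∈ s, w ≠ D.w j) → (∀ j ∈ s, w ≠ (D.wbar j)⁻¹) →
    D.stringLHS s w = 1

/-- `dI_k/dx` for `I_k = a_k · z̄(1/w_k)`. -/
def derivI (k : ι) : ℂ :=
  D.a k * (D.dr / D.w k - D.r * D.dw k / D.w k ^ 2 + D.dubar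
    + ∑ l ∈ s, D.abar l * (D.dwbar l + D.dw k / D.w k ^ 2) / (D.wbar l - 1 / D.w k))

/-- The data of the reduction seen in the coordinate `1 / w`, which exchanges `z` and `z̄`. -/
def swap : LogReductionData ι where
  r := D.r
  dr := D.dr
  du := D.dubar
  dubar := D.du
  a := D.abar
  abar := D.a
  w := D.wbar
  dw := D.dwbar
  wbar := D.w
  dwbar := D.dw

theorem derivI_eq (k : ι) :
    D.derivI s k = D.a k * (D.Zbx s (D.w k) + D.dw k * D.Zbw s (D.w k)) := by
  have hterm : ∀ l ∈ s, D.abar l * (D.dwbar l + D.dw k / D.w k ^ 2) / (D.wbar l - 1 / D.w k)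
      = D.abar l * D.dwbar l / (D.wbar l - 1 / D.w k)
        + D.dw k * (D.abar l / (D.w k ^ 2 * (D.wbar l - 1 / D.w k))) := fun l _ => by
    simp only [div_eq_mul_inv, mul_inv]; ring
  rw [derivI, Zbx, Zbw, Finset.sum_congr rfl hterm, Finset.sum_add_distrib, ← Finset.mul_sum]
  ring

theorem Zw_inv {w : ℂ} (hw : w ≠ 0) : D.Zw s w⁻¹ = -w ^ 2 * D.swap.Zbw s w := by
  have hterm : ∀ i ∈ s, D.a i / (w⁻¹ - D.w i)
      = -w ^ 2 * (D.a i / (w ^ 2 * (D.w i - 1 / w))) := fun i _ => by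
    rw [← neg_sub, one_div, div_neg, mul_comm (w ^ 2), ← div_div, neg_mul,
        mul_div_cancel₀ _ (pow_ne_zero 2 hw)]
  simp only [Zw, Zbw, swap]
  rw [Finset.sum_congr rfl hterm, ← Finset.mul_sum]
  field_simp
  ring

theorem Zx_inv (w : ℂ) : D.Zx s w⁻¹ = D.swap.Zbx s w := by
  simp only [Zx, Zbx, swap, div_eq_mul_inv, one_mul]

theorem Zbw_inv (w : ℂ) : D.Zbw s w⁻¹ = -w ^ 2 * D.swap.Zw s w := by
  have hterm : ∀ i ∈ s, D.abar i / (w⁻¹ ^ 2 * (D.wbar i - 1 / w⁻¹))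
      = -w ^ 2 * (D.abar i / (w - D.wbar i)) := fun i _ => by
    rw [one_div, inv_inv, ← neg_sub w, mul_neg, div_neg, inv_pow, mul_comm, ← div_div,
      div_inv_eq_mul]
    ring
  simp only [Zw, Zbw, swap]
  rw [Finset.sum_congr rfl hterm, ← Finset.mul_sum, inv_pow, div_inv_eq_mul]
  ring

theorem Zbx_inv (w : ℂ) : D.Zbx s w⁻¹ = D.swap.Zx s w := by
  simp only [Zx, Zbx, swap, div_inv_eq_mul, one_mul]

theorem stringLHS_inv {w : ℂ} (hw : w ≠ 0) : D.stringLHS s w⁻¹ = D.swap.stringLHS s w := by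
  rw [stringLHS, stringLHS, D.Zw_inv s hw, Zx_inv, Zbw_inv, Zbx_inv]
  field_simp
  ring

theorem StringEquation.swap {D : LogReductionData ι} {s : Finset ι} (h : D.StringEquation s) :
    D.swap.StringEquation s := by
  intro w hw hwbar hw'
  rw [← D.stringLHS_inv s hw]
  refine h w⁻¹ (inv_ne_zero hw) (fun j hj => ?_) fun j hj => inv_injective.ne (hwbar j hj)
  rw [← inv_inv (D.w j)]
  exact inv_injective.ne (hw' j hj)

theorem StringEquation.eventually_nhdsNE {D : LogReductionData ι} {s : Finset ι}
    (h : D.StringEquation s) (p : ℂ) : ∀ᶠ w in 𝓝[≠] p, D.stringLHS s w = 1 := by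
  filter_upwards [eventually_nhdsNE_forall_ne p {0} id, eventually_nhdsNE_forall_ne p s D.w,
    eventually_nhdsNE_forall_ne p s fun j => (D.wbar j)⁻¹] with w h0 hw hwbar
  exact h w (h0 0 (Finset.mem_singleton_self 0)) hw hwbar

variable {D s} {k : ι}

theorem hasSimpleResidueAt_Zw [DecidableEq ι] (hk : k ∈ s)
    (hinj : ∀ i ∈ s, i ≠ k → D.w i ≠ D.w k) :
    HasSimpleResidueAt (D.Zw s) (D.w k) (D.a k) := by
  have h := (continuousAt_const (y := D.r)).hasSimpleResidueAt_zero.add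
    (hasSimpleResidueAt_sum_div_sub D.a D.w hk hinj)
  rwa [zero_add] at h

theorem hasSimpleResidueAt_Zx [DecidableEq ι] (hk : k ∈ s)
    (hinj : ∀ i ∈ s, i ≠ k → D.w i ≠ D.w k) :
    HasSimpleResidueAt (D.Zx s) (D.w k) (-(D.a k * D.dw k)) := by
  have hlin : ContinuousAt (fun w => D.dr * w + D.du) (D.w k) := by fun_prop
  have h := hlin.hasSimpleResidueAt_zero.add
    (hasSimpleResidueAt_sum_div_sub (fun i => -(D.a i * D.dw i)) D.w hk hinj)
  rw [zero_add] at h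
  refine h.congr (Eventually.of_forall fun w => ?_)
  simp only [Zx, ← neg_sub w, div_neg, neg_div]

theorem continuousAt_Zbx {p : ℂ} (hp : p ≠ 0) (hden : ∀ l ∈ s, D.wbar l - 1 / p ≠ 0) :
    ContinuousAt (D.Zbx s) p :=
  ((continuousAt_const.div continuousAt_id hp).add continuousAt_const).add <|
    tendsto_finsetSum s fun i hi => continuousAt_const.div
      (continuousAt_const.sub (continuousAt_const.div continuousAt_id hp)) (hden i hi)

theorem continuousAt_Zbw {p : ℂ} (hp : p ≠ 0) (hden : ∀ l ∈ s, D.wbar l - 1 / p ≠ 0) :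
    ContinuousAt (D.Zbw s) p :=
  (continuousAt_const.div (continuousAt_id.pow 2) (pow_ne_zero 2 hp)).add <|
    tendsto_finsetSum s fun i hi => continuousAt_const.div
      ((continuousAt_id.pow 2).mul
        (continuousAt_const.sub (continuousAt_const.div continuousAt_id hp)))
      (mul_ne_zero (pow_ne_zero 2 hp) (hden i hi))

theorem hasSimpleResidueAt_stringLHS (hk : k ∈ s) (hwk : D.w k ≠ 0)
    (hinj : ∀ i ∈ s, i ≠ k → D.w i ≠ D.w k)
    (hwwbar : ∀ l ∈ s, D.w k * D.wbar l ≠ 1) :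
    HasSimpleResidueAt (D.stringLHS s) (D.w k) (D.w k * D.derivI s k) := by
  classical
  have hden : ∀ l ∈ s, D.wbar l - 1 / D.w k ≠ 0 := fun l hl hl0 => hwwbar l hl <| by
    rw [sub_eq_zero.1 hl0, mul_one_div_cancel hwk]
  have h := ((hasSimpleResidueAt_Zw hk hinj).mul_continuousAt
      (continuousAt_id.mul (continuousAt_Zbx hwk hden))).sub
    ((hasSimpleResidueAt_Zx hk hinj).mul_continuousAt
      (continuousAt_id.mul (continuousAt_Zbw hwk hden)))
  simp only [Pi.mul_apply, id] at h
  rw [derivI_eq]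
  convert h using 1
  · funext w
    rw [stringLHS]
    ring
  · ring

theorem derivI_eq_zero (h : D.StringEquation s) (hk : k ∈ s) (hwk : D.w k ≠ 0)
    (hinj : ∀ i ∈ s, i ≠ k → D.w i ≠ D.w k)
    (hwwbar : ∀ l ∈ s, D.w k * D.wbar l ≠ 1) :
    D.derivI s k = 0 := by
  have hzero : HasSimpleResidueAt (D.stringLHS s) (D.w k) 0 :=
    continuousAt_const.hasSimpleResidueAt_zero.congr <|
      (h.eventually_nhdsNE (D.w k)).mono fun _ hw => hw.symm
  have hres := (hasSimpleResidueAt_stringLHS hk hwk hinj hwwbar).unique hzero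
  exact (mul_eq_zero.1 hres).resolve_left hwk

end

end LogReductionData

theorem Ik_integral_of_string_equation_general
    (n : ℕ) (a abar : ℕ → ℂ)
    (r : ℝ → ℂ) (W Wb : ℕ → ℝ → ℂ)
    (r' u' ubar' : ℝ → ℂ) (W' Wb' : ℕ → ℝ → ℂ)
    (hW0 : ∀ i ∈ Finset.Icc 1 (n + 1), ∀ x : ℝ, W i x ≠ 0)
    (hWb0 : ∀ i ∈ Finset.Icc 1 (n + 1), ∀ x : ℝ, Wb i x ≠ 0)
    (hWdist : ∀ i ∈ Finset.Icc 1 (n + 1), ∀ j ∈ Finset.Icc 1 (n + 1), i ≠ j →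
      ∀ x : ℝ, W i x ≠ W j x)
    (hWbdist : ∀ i ∈ Finset.Icc 1 (n + 1), ∀ j ∈ Finset.Icc 1 (n + 1), i ≠ j →
      ∀ x : ℝ, Wb i x ≠ Wb j x)
    (hWWb : ∀ i ∈ Finset.Icc 1 (n + 1), ∀ j ∈ Finset.Icc 1 (n + 1),
      ∀ x : ℝ, W i x * Wb j x ≠ 1)
    -- the rational (in w) partial derivatives of z and z̄
    (Zw Zx Zbw Zbx : ℝ → ℂ → ℂ)
    (hZw : ∀ x w, Zw x w = r x + ∑ i ∈ Finset.Icc 1 (n + 1), a i / (w - W i x))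
    (hZx : ∀ x w, Zx x w =
      r' x * w + u' x + ∑ i ∈ Finset.Icc 1 (n + 1), a i * W' i x / (W i x - w))
    (hZbw : ∀ x w, Zbw x w =
      - r x / w ^ 2 + ∑ i ∈ Finset.Icc 1 (n + 1), abar i / (w ^ 2 * (Wb i x - 1 / w)))
    (hZbx : ∀ x w, Zbx x w =
      r' x / w + ubar' x + ∑ i ∈ Finset.Icc 1 (n + 1), abar i * Wb' i x / (Wb i x - 1 / w))
    -- the string equation
    (hstring : ∀ (x : ℝ) (w : ℂ), w ≠ 0 → (∀ j ∈ Finset.Icc 1 (n + 1), w ≠ W j x) →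
      (∀ j ∈ Finset.Icc 1 (n + 1), w ≠ (Wb j x)⁻¹) →
      w * Zw x w * Zbx x w - w * Zx x w * Zbw x w = 1) :
    ∀ x : ℝ, ∀ k ∈ Finset.Icc 1 (n + 1),
      a k * (r' x / W k x - r x * W' k x / (W k x) ^ 2 + ubar' x
        + ∑ l ∈ Finset.Icc 1 (n + 1),
            abar l * (Wb' l x + W' k x / (W k x) ^ 2) / (Wb l x - 1 / W k x)) = 0 ∧
      abar k * (r' x / Wb k x - r x * Wb' k x / (Wb k x) ^ 2 + u' x
        + ∑ l ∈ Finset.Icc 1 (n + 1),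
            a l * (W' l x + Wb' k x / (Wb k x) ^ 2) / (W l x - 1 / Wb k x)) = 0 := by
  intro x k hk
  let D : LogReductionData ℕ :=
    { r := r x, dr := r' x, du := u' x, dubar := ubar' x, a := a, abar := abar,
      w := (W · x), dw := (W' · x), wbar := (Wb · x), dwbar := (Wb' · x) }
  have hD : D.StringEquation (Finset.Icc 1 (n + 1)) := fun w hw hWw hWbw => by
    have h := hstring x w hw hWw hWbw
    rwa [hZw, hZx, hZbw, hZbx] at h
  exact ⟨D.derivI_eq_zero hD hk (hW0 k hk x) (fun i hi hik => hWdist i hi k hk hik x)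
      fun l hl => hWWb k hk l hl x,
    D.swap.derivI_eq_zero hD.swap hk (hWb0 k hk x) (fun i hi hik => hWbdist i hi k hk hik x)
      fun l hl => mul_comm (W l x) (Wb k x) ▸ hWWb l hl k hk x⟩

/-- under the string equation, the quantities `I_k = a_k·z̄(1/w_k)`
and `Ī_k = ā_k·z(1/w̄_k)` are integrals of motion: their `x`-derivatives, written
explicitly below, vanish for every `x` and every `k ∈ {1,…,n+1}`. -/
theorem Ik_integral_of_string_equation
    (n : ℕ) (a abar : ℕ → ℂ)
    (r u ubar : ℝ → ℂ) (W Wb : ℕ → ℝ → ℂ)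
    (r' u' ubar' : ℝ → ℂ) (W' Wb' : ℕ → ℝ → ℂ)
    (ha : ∀ i ∈ Finset.Icc 1 (n + 1), a i ≠ 0)
    (habar : ∀ i ∈ Finset.Icc 1 (n + 1), abar i ≠ 0)
    (hasum : ∑ i ∈ Finset.Icc 1 (n + 1), a i = 0)
    (habarsum : ∑ i ∈ Finset.Icc 1 (n + 1), abar i = 0)
    (hr0 : ∀ x, r x ≠ 0)
    (hW0 : ∀ i ∈ Finset.Icc 1 (n + 1), ∀ x : ℝ, W i x ≠ 0)
    (hWb0 : ∀ i ∈ Finset.Icc 1 (n + 1), ∀ x : ℝ, Wb i x ≠ 0)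
    (hWdist : ∀ i ∈ Finset.Icc 1 (n + 1), ∀ j ∈ Finset.Icc 1 (n + 1), i ≠ j →
      ∀ x : ℝ, W i x ≠ W j x)
    (hWbdist : ∀ i ∈ Finset.Icc 1 (n + 1), ∀ j ∈ Finset.Icc 1 (n + 1), i ≠ j →
      ∀ x : ℝ, Wb i x ≠ Wb j x)
    (hWWb : ∀ i ∈ Finset.Icc 1 (n + 1), ∀ j ∈ Finset.Icc 1 (n + 1),
      ∀ x : ℝ, W i x * Wb j x ≠ 1)
    (hdr : ∀ x, HasDerivAt r (r' x) x)
    (hdu : ∀ x, HasDerivAt u (u' x) x)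
    (hdubar : ∀ x, HasDerivAt ubar (ubar' x) x)
    (hdW : ∀ i ∈ Finset.Icc 1 (n + 1), ∀ x, HasDerivAt (W i) (W' i x) x)
    (hdWb : ∀ i ∈ Finset.Icc 1 (n + 1), ∀ x, HasDerivAt (Wb i) (Wb' i x) x)
    -- the rational (in w) partial derivatives of z and z̄
    (Zw Zx Zbw Zbx : ℝ → ℂ → ℂ)
    (hZw : ∀ x w, Zw x w = r x + ∑ i ∈ Finset.Icc 1 (n + 1), a i / (w - W i x))
    (hZx : ∀ x w, Zx x w =
      r' x * w + u' x + ∑ i ∈ Finset.Icc 1 (n + 1), a i * W' i x / (W i x - w))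
    (hZbw : ∀ x w, Zbw x w =
      - r x / w ^ 2 + ∑ i ∈ Finset.Icc 1 (n + 1), abar i / (w ^ 2 * (Wb i x - 1 / w)))
    (hZbx : ∀ x w, Zbx x w =
      r' x / w + ubar' x + ∑ i ∈ Finset.Icc 1 (n + 1), abar i * Wb' i x / (Wb i x - 1 / w))
    -- the string equation
    (hstring : ∀ (x : ℝ) (w : ℂ), w ≠ 0 → (∀ j ∈ Finset.Icc 1 (n + 1), w ≠ W j x) →
      (∀ j ∈ Finset.Icc 1 (n + 1), w ≠ (Wb j x)⁻¹) →
      w * Zw x w * Zbx x w - w * Zx x w * Zbw x w = 1) :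
    ∀ x : ℝ, ∀ k ∈ Finset.Icc 1 (n + 1),
      a k * (r' x / W k x - r x * W' k x / (W k x) ^ 2 + ubar' x
        + ∑ l ∈ Finset.Icc 1 (n + 1),
            abar l * (Wb' l x + W' k x / (W k x) ^ 2) / (Wb l x - 1 / W k x)) = 0 ∧
      abar k * (r' x / Wb k x - r x * Wb' k x / (Wb k x) ^ 2 + u' x
        + ∑ l ∈ Finset.Icc 1 (n + 1),
            a l * (W' l x + Wb' k x / (Wb k x) ^ 2) / (W l x - 1 / Wb k x)) = 0 :=
  Ik_integral_of_string_equation_general n a abar r W Wb r' u' ubar' W' Wb' hW0 hWb0 hWdist hWbdist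
    hWWb Zw Zx Zbw Zbx hZw hZx hZbw hZbx hstring
end

section
/- If the string equation holds, then for every x: ū′ + Σ_{l=1}^{n+1} ā_l·w̄_l′/w̄_l = 0 and u′ + Σ_{l=1}^{n+1} a_l·w_l′/w_l = 0. (That is, the quantities I₀ = ū + Σ ā_l log w̄_l = z̄(1/w = 0) and Ī₀ = u + Σ a_l log w_l = z(0) are integrals of the string equation.) -/
/-!
Multiplied by `w`, the string equation reads
`(w Z_w) (w Z̄_x) - Z_x (w² Z̄_w) = w`. As `w → 0` we have `w Z_w → 0`, `w Z̄_x → r′`,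
`w² Z̄_w → -r` and `Z_x → Z_x(0) = u′ + Σ aₗ wₗ′ / wₗ`, so `r Z_x(0) = 0`.
The other identity is the same statement at `w = ∞`: the substitution `w ↦ 1/w`, which exchanges
`z` and `z̄`, preserves the string equation.
-/

open Finset Filter Topology

/-- The data of the logarithmic reduction at a fixed `x`. The primed fields are the values of the
derivatives, which enter the string equation only as independent numbers. -/
structure StringData (𝕜 ι : Type*) where
  s : Finset ι
  r : 𝕜
  r' : 𝕜
  u' : 𝕜
  ubar' : 𝕜
  a : ι → 𝕜
  abar : ι → 𝕜
  w : ι → 𝕜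
  w' : ι → 𝕜
  wbar : ι → 𝕜
  wbar' : ι → 𝕜

theorem tendsto_inv_sub_one_div {𝕜 : Type*} [NontriviallyNormedField 𝕜] (c : 𝕜) :
    Tendsto (fun w : 𝕜 => (c - 1 / w)⁻¹) (𝓝[≠] 0) (𝓝 0) := by
  simpa only [one_div, Function.comp_def] using
    tendsto_inv₀_cobounded.comp ((tendsto_const_sub_cobounded c).comp tendsto_inv₀_nhdsNE_zero)

namespace StringData

variable {𝕜 ι : Type*} (D : StringData 𝕜 ι)

/-- Exchanges the roles of `z` and `z̄`; on the string equation this is the substitution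
`w ↦ 1/w` (`swap_string_inv`). -/
def swap : StringData 𝕜 ι where
  s := D.s
  r := D.r
  r' := D.r'
  u' := D.ubar'
  ubar' := D.u'
  a := D.abar
  abar := D.a
  w := D.wbar
  w' := D.wbar'
  wbar := D.w
  wbar' := D.w'

@[simp]
theorem swap_swap : D.swap.swap = D := rfl

section Field

variable [Field 𝕜]

def Zw (w : 𝕜) : 𝕜 := D.r + ∑ i ∈ D.s, D.a i / (w - D.w i)

def Zx (w : 𝕜) : 𝕜 := D.r' * w + D.u' + ∑ i ∈ D.s, D.a i * D.w' i / (D.w i - w)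

def Zbw (w : 𝕜) : 𝕜 := -D.r / w ^ 2 + ∑ i ∈ D.s, D.abar i / (w ^ 2 * (D.wbar i - 1 / w))

def Zbx (w : 𝕜) : 𝕜 :=
  D.r' / w + D.ubar' + ∑ i ∈ D.s, D.abar i * D.wbar' i / (D.wbar i - 1 / w)

def string (w : 𝕜) : 𝕜 := w * D.Zw w * D.Zbx w - w * D.Zx w * D.Zbw w

theorem swap_Zx_inv (w : 𝕜) : D.swap.Zx w⁻¹ = D.Zbx w := by
  simp only [Zx, Zbx, swap, div_eq_mul_inv, one_mul]

theorem Zbw_eq_swap_Zw_inv (w : 𝕜) : D.Zbw w = -D.swap.Zw w⁻¹ / w ^ 2 := by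
  simp only [Zbw, Zw, swap, neg_add, add_div, sum_div, neg_div, ← sum_neg_distrib, one_div]
  congr 1
  refine sum_congr rfl fun i _ => ?_
  rw [← neg_sub, mul_neg, div_neg, div_div, mul_comm]

theorem swap_string_inv {w : 𝕜} (hw : w ≠ 0) : D.swap.string w⁻¹ = D.string w := by
  have hZbx : D.swap.Zbx w⁻¹ = D.Zx w := by simpa using (D.swap.swap_Zx_inv w⁻¹).symm
  have hZbw : D.swap.Zbw w⁻¹ = -D.Zw w / w⁻¹ ^ 2 := by simpa using D.swap.Zbw_eq_swap_Zw_inv w⁻¹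
  simp only [string, hZbx, hZbw, swap_Zx_inv, Zbw_eq_swap_Zw_inv D w]
  field_simp
  ring

theorem eventually_string_eq_one
    (h : ∀ w ≠ 0, (∀ j ∈ D.s, w ≠ D.w j) → (∀ j ∈ D.s, w ≠ (D.wbar j)⁻¹) → D.string w = 1) :
    ∀ᶠ w in cofinite, D.string w = 1 := by
  filter_upwards [eventually_cofinite_ne 0,
    (D.s.finite_toSet.image D.w).eventually_cofinite_notMem,
    (D.s.finite_toSet.image fun j => (D.wbar j)⁻¹).eventually_cofinite_notMem] with w h0 hw hwbar
  exact h w h0 (fun j hj hj' => hw ⟨j, hj, hj'.symm⟩) fun j hj hj' => hwbar ⟨j, hj, hj'.symm⟩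

theorem swap_eventually_string_eq_one (h : ∀ᶠ w in cofinite, D.string w = 1) :
    ∀ᶠ v in cofinite, D.swap.string v = 1 := by
  filter_upwards [inv_injective.tendsto_cofinite.eventually h, eventually_cofinite_ne 0]
    with v hv hv0
  rwa [← inv_inv v, swap_string_inv D (inv_ne_zero hv0)]

theorem Zx_zero : D.Zx 0 = D.u' + ∑ i ∈ D.s, D.a i * D.w' i / D.w i := by
  simp [Zx]

end Field

section Analysis

variable [NontriviallyNormedField 𝕜]

theorem continuousAt_Zw (hw : ∀ i ∈ D.s, D.w i ≠ 0) : ContinuousAt D.Zw 0 :=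
  continuousAt_const.add <| tendsto_finsetSum D.s fun i hi =>
    continuousAt_const.div (continuousAt_id.sub continuousAt_const) (by simpa using hw i hi)

theorem continuousAt_Zx (hw : ∀ i ∈ D.s, D.w i ≠ 0) : ContinuousAt D.Zx 0 :=
  ((continuousAt_const.mul continuousAt_id).add continuousAt_const).add <|
    tendsto_finsetSum D.s fun i hi =>
      continuousAt_const.div (continuousAt_const.sub continuousAt_id) (by simpa using hw i hi)

theorem tendsto_mul_Zbx : Tendsto (fun w => w * D.Zbx w) (𝓝[≠] 0) (𝓝 D.r') := by
  have hw₀ : Tendsto (fun w : 𝕜 => w) (𝓝[≠] 0) (𝓝 0) :=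
    tendsto_nhdsWithin_of_tendsto_nhds tendsto_id
  have hlim : Tendsto (fun w => D.r' + w * D.ubar' +
      ∑ i ∈ D.s, D.abar i * D.wbar' i * (w * (D.wbar i - 1 / w)⁻¹)) (𝓝[≠] 0) (𝓝 D.r') := by
    simpa using (tendsto_const_nhds.add (hw₀.mul_const D.ubar')).add <|
      tendsto_finsetSum D.s fun i _ =>
        (hw₀.mul (tendsto_inv_sub_one_div (D.wbar i))).const_mul (D.abar i * D.wbar' i)
  refine hlim.congr' (eventually_nhdsWithin_of_forall fun w (hw : w ≠ 0) => ?_)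
  simp only [Zbx, mul_add, mul_sum]
  field_simp

theorem tendsto_sq_mul_Zbw : Tendsto (fun w => w ^ 2 * D.Zbw w) (𝓝[≠] 0) (𝓝 (-D.r)) := by
  have hlim : Tendsto (fun w => -D.r + ∑ i ∈ D.s, D.abar i / (D.wbar i - 1 / w))
      (𝓝[≠] 0) (𝓝 (-D.r)) := by
    simpa [div_eq_mul_inv] using tendsto_const_nhds.add
      (tendsto_finsetSum D.s fun i _ => (tendsto_inv_sub_one_div (D.wbar i)).const_mul (D.abar i))
  refine hlim.congr' (eventually_nhdsWithin_of_forall fun w (hw : w ≠ 0) => ?_)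
  simp only [Zbw, mul_add, mul_sum]
  congr 1
  · field_simp
  · refine sum_congr rfl fun i _ => ?_
    rw [mul_div_assoc', mul_div_mul_left _ _ (pow_ne_zero 2 hw)]

theorem tendsto_mul_string_sub_one (hw : ∀ i ∈ D.s, D.w i ≠ 0) :
    Tendsto (fun w => w * (D.string w - 1)) (𝓝[≠] 0) (𝓝 (D.r * D.Zx 0)) := by
  have hZw : Tendsto (fun w => w * D.Zw w) (𝓝[≠] 0) (𝓝 0) := by
    simpa using (tendsto_nhdsWithin_of_tendsto_nhds (tendsto_id.mul (D.continuousAt_Zw hw)))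
  have hZx := tendsto_nhdsWithin_of_tendsto_nhds (D.continuousAt_Zx hw) (s := {0}ᶜ)
  have hw₀ : Tendsto (fun w : 𝕜 => w) (𝓝[≠] 0) (𝓝 0) :=
    tendsto_nhdsWithin_of_tendsto_nhds tendsto_id
  convert ((hZw.mul D.tendsto_mul_Zbx).sub (hZx.mul D.tendsto_sq_mul_Zbw)).sub hw₀ using 2
  · simp only [string]
    ring
  · ring

theorem Zx_zero_eq_zero (hr : D.r ≠ 0) (hw : ∀ i ∈ D.s, D.w i ≠ 0)
    (h : ∀ᶠ w in cofinite, D.string w = 1) : D.Zx 0 = 0 := by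
  refine (mul_eq_zero.1 <| tendsto_nhds_unique (D.tendsto_mul_string_sub_one hw)
    (tendsto_const_nhds.congr' ?_)).resolve_left hr
  filter_upwards [nhdsNE_le_cofinite 0 h] with w hw
  simp [hw]

end Analysis

end StringData

theorem I0_integral_of_string_equation_general
    (n : ℕ) (a abar : ℕ → ℂ)
    (r : ℝ → ℂ) (W Wb : ℕ → ℝ → ℂ)
    (r' u' ubar' : ℝ → ℂ) (W' Wb' : ℕ → ℝ → ℂ)
    (hr0 : ∀ x, r x ≠ 0)
    (hW0 : ∀ i ∈ Finset.Icc 1 (n + 1), ∀ x : ℝ, W i x ≠ 0)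
    (hWb0 : ∀ i ∈ Finset.Icc 1 (n + 1), ∀ x : ℝ, Wb i x ≠ 0)
    -- the rational (in w) partial derivatives of z and z̄
    (Zw Zx Zbw Zbx : ℝ → ℂ → ℂ)
    (hZw : ∀ x w, Zw x w = r x + ∑ i ∈ Finset.Icc 1 (n + 1), a i / (w - W i x))
    (hZx : ∀ x w, Zx x w =
      r' x * w + u' x + ∑ i ∈ Finset.Icc 1 (n + 1), a i * W' i x / (W i x - w))
    (hZbw : ∀ x w, Zbw x w =
      - r x / w ^ 2 + ∑ i ∈ Finset.Icc 1 (n + 1), abar i / (w ^ 2 * (Wb i x - 1 / w)))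
    (hZbx : ∀ x w, Zbx x w =
      r' x / w + ubar' x + ∑ i ∈ Finset.Icc 1 (n + 1), abar i * Wb' i x / (Wb i x - 1 / w))
    -- the string equation
    (hstring : ∀ (x : ℝ) (w : ℂ), w ≠ 0 → (∀ j ∈ Finset.Icc 1 (n + 1), w ≠ W j x) →
      (∀ j ∈ Finset.Icc 1 (n + 1), w ≠ (Wb j x)⁻¹) →
      w * Zw x w * Zbx x w - w * Zx x w * Zbw x w = 1) :
    ∀ x : ℝ,
      ubar' x + ∑ l ∈ Finset.Icc 1 (n + 1), abar l * Wb' l x / Wb l x = 0 ∧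
      u' x + ∑ l ∈ Finset.Icc 1 (n + 1), a l * W' l x / W l x = 0 := by
  intro x
  let D : StringData ℂ ℕ :=
    ⟨Icc 1 (n + 1), r x, r' x, u' x, ubar' x, a, abar, (W · x), (W' · x), (Wb · x), (Wb' · x)⟩
  have hD : ∀ᶠ w in cofinite, D.string w = 1 := D.eventually_string_eq_one fun w hw hW hWb => by
    have h := hstring x w hw hW hWb
    rwa [hZw, hZx, hZbw, hZbx] at h
  have hubar := D.swap.Zx_zero_eq_zero (hr0 x) (hWb0 · · x) (D.swap_eventually_string_eq_one hD)
  have hu := D.Zx_zero_eq_zero (hr0 x) (hW0 · · x) hD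
  rw [StringData.Zx_zero] at hubar hu
  exact ⟨hubar, hu⟩

/-- under the string equation, the quantities
`I₀ = ū + Σ ā_l log w̄_l` and `Ī₀ = u + Σ a_l log w_l` are integrals of motion:
`ū′ + Σ ā_l w̄_l′/w̄_l = 0` and `u′ + Σ a_l w_l′/w_l = 0` for every `x`. -/
theorem I0_integral_of_string_equation
    (n : ℕ) (a abar : ℕ → ℂ)
    (r u ubar : ℝ → ℂ) (W Wb : ℕ → ℝ → ℂ)
    (r' u' ubar' : ℝ → ℂ) (W' Wb' : ℕ → ℝ → ℂ)
    (ha : ∀ i ∈ Finset.Icc 1 (n + 1), a i ≠ 0)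
    (habar : ∀ i ∈ Finset.Icc 1 (n + 1), abar i ≠ 0)
    (hasum : ∑ i ∈ Finset.Icc 1 (n + 1), a i = 0)
    (habarsum : ∑ i ∈ Finset.Icc 1 (n + 1), abar i = 0)
    (hr0 : ∀ x, r x ≠ 0)
    (hW0 : ∀ i ∈ Finset.Icc 1 (n + 1), ∀ x : ℝ, W i x ≠ 0)
    (hWb0 : ∀ i ∈ Finset.Icc 1 (n + 1), ∀ x : ℝ, Wb i x ≠ 0)
    (hWdist : ∀ i ∈ Finset.Icc 1 (n + 1), ∀ j ∈ Finset.Icc 1 (n + 1), i ≠ j →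
      ∀ x : ℝ, W i x ≠ W j x)
    (hWbdist : ∀ i ∈ Finset.Icc 1 (n + 1), ∀ j ∈ Finset.Icc 1 (n + 1), i ≠ j →
      ∀ x : ℝ, Wb i x ≠ Wb j x)
    (hWWb : ∀ i ∈ Finset.Icc 1 (n + 1), ∀ j ∈ Finset.Icc 1 (n + 1),
      ∀ x : ℝ, W i x * Wb j x ≠ 1)
    (hdr : ∀ x, HasDerivAt r (r' x) x)
    (hdu : ∀ x, HasDerivAt u (u' x) x)
    (hdubar : ∀ x, HasDerivAt ubar (ubar' x) x)
    (hdW : ∀ i ∈ Finset.Icc 1 (n + 1), ∀ x, HasDerivAt (W i) (W' i x) x)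
    (hdWb : ∀ i ∈ Finset.Icc 1 (n + 1), ∀ x, HasDerivAt (Wb i) (Wb' i x) x)
    -- the rational (in w) partial derivatives of z and z̄
    (Zw Zx Zbw Zbx : ℝ → ℂ → ℂ)
    (hZw : ∀ x w, Zw x w = r x + ∑ i ∈ Finset.Icc 1 (n + 1), a i / (w - W i x))
    (hZx : ∀ x w, Zx x w =
      r' x * w + u' x + ∑ i ∈ Finset.Icc 1 (n + 1), a i * W' i x / (W i x - w))
    (hZbw : ∀ x w, Zbw x w =
      - r x / w ^ 2 + ∑ i ∈ Finset.Icc 1 (n + 1), abar i / (w ^ 2 * (Wb i x - 1 / w)))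
    (hZbx : ∀ x w, Zbx x w =
      r' x / w + ubar' x + ∑ i ∈ Finset.Icc 1 (n + 1), abar i * Wb' i x / (Wb i x - 1 / w))
    -- the string equation
    (hstring : ∀ (x : ℝ) (w : ℂ), w ≠ 0 → (∀ j ∈ Finset.Icc 1 (n + 1), w ≠ W j x) →
      (∀ j ∈ Finset.Icc 1 (n + 1), w ≠ (Wb j x)⁻¹) →
      w * Zw x w * Zbx x w - w * Zx x w * Zbw x w = 1) :
    ∀ x : ℝ,
      ubar' x + ∑ l ∈ Finset.Icc 1 (n + 1), abar l * Wb' l x / Wb l x = 0 ∧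
      u' x + ∑ l ∈ Finset.Icc 1 (n + 1), a l * W' l x / W l x = 0 :=
  I0_integral_of_string_equation_general n a abar r W Wb r' u' ubar' W' Wb' hr0 hW0 hWb0 Zw Zx Zbw
    Zbx hZw hZx hZbw hZbx hstring
end

section
/- Let S ⊂ ℤ be finite, let z_i : ℝ → ℂ be differentiable for i ∈ S, and set z(w,x) := Σ_{i∈S} z_i(x)·wⁱ and z̄(v,x) := Σ_{i∈S} conj(z_i(x))·vⁱ. Then for every x ∈ ℝ and every φ ∈ ℝ, with w = e^{iφ}, the quantity w·( ∂_w z(w,x) · ∂_x[z̄(1/w,x)] − ∂_x z(w,x) · ∂_w[z̄(1/w,x)] ) is a real number and equals 2·Im( ∂_φ[z(e^{iφ},x)] · conj(∂_x z(e^{iφ},x)) ). (This is the identity relating the Galin–Polubarinova form of Darcy's law on the moving boundary, parametrized by the conformal map z restricted to the unit circle, to the Lax–Poisson bracket expression of the string equation.) -/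
open Finset Complex

/-- for a one-parameter family of Laurent polynomials
`z(w,x) = Σ_{i∈S} z_i(x)·wⁱ` with `z̄(v,x) = Σ_{i∈S} conj(z_i(x))·vⁱ`, on the unit
circle `w = e^{iφ}` the quantity
`w·(∂_w z · ∂_x[z̄(1/w)] − ∂_x z · ∂_w[z̄(1/w)])` is real and equals
`2·Im(∂_φ[z(e^{iφ},x)] · conj(∂_x z(e^{iφ},x)))`. -/
theorem galin_polubarinova_bracket_identity
    (S : Finset ℤ) (zc zc' : ℤ → ℝ → ℂ)
    (hd : ∀ i ∈ S, ∀ x : ℝ, HasDerivAt (zc i) (zc' i x) x) :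
    ∀ (x φ : ℝ),
      (Complex.exp (Complex.I * φ)
        * ((∑ i ∈ S, (i : ℂ) * zc i x * Complex.exp (Complex.I * φ) ^ (i - 1))
            * (∑ i ∈ S, (starRingEnd ℂ) (zc' i x) * Complex.exp (Complex.I * φ) ^ (-i))
          - (∑ i ∈ S, zc' i x * Complex.exp (Complex.I * φ) ^ i)
            * (∑ i ∈ S, (starRingEnd ℂ) (zc i x) * (-(i : ℂ))
                * Complex.exp (Complex.I * φ) ^ (-i - 1)))).im = 0 ∧
      Complex.exp (Complex.I * φ)
        * ((∑ i ∈ S, (i : ℂ) * zc i x * Complex.exp (Complex.I * φ) ^ (i - 1))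
            * (∑ i ∈ S, (starRingEnd ℂ) (zc' i x) * Complex.exp (Complex.I * φ) ^ (-i))
          - (∑ i ∈ S, zc' i x * Complex.exp (Complex.I * φ) ^ i)
            * (∑ i ∈ S, (starRingEnd ℂ) (zc i x) * (-(i : ℂ))
                * Complex.exp (Complex.I * φ) ^ (-i - 1)))
      = ((2 * ((∑ i ∈ S, zc i x * (i : ℂ) * Complex.I * Complex.exp (Complex.I * φ) ^ i)
            * (starRingEnd ℂ)
                (∑ i ∈ S, zc' i x * Complex.exp (Complex.I * φ) ^ i)).im : ℝ) : ℂ) := by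
  intro x φ
  set w := Complex.exp (Complex.I * φ) with hw
  have hw0 : w ≠ 0 := Complex.exp_ne_zero _
  have hcw : (starRingEnd ℂ) w = w⁻¹ := by
    rw [hw, ← Complex.exp_conj, ← Complex.exp_neg]
    congr 1
    simp [map_mul, Complex.conj_I, Complex.conj_ofReal]
  have hcp : ∀ i : ℤ, (starRingEnd ℂ) (w ^ i) = w ^ (-i) := fun i => by
    rw [map_zpow₀, hcw, inv_zpow, ← zpow_neg]
  set A := ∑ i ∈ S, (i : ℂ) * zc i x * w ^ (i - 1) with hA
  set Z := ∑ i ∈ S, zc' i x * w ^ i with hZ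
  have hB : (∑ i ∈ S, (starRingEnd ℂ) (zc' i x) * w ^ (-i)) = (starRingEnd ℂ) Z := by
    rw [hZ, map_sum]
    exact Finset.sum_congr rfl fun i _ => by rw [map_mul, hcp]
  have hD : (∑ i ∈ S, (starRingEnd ℂ) (zc i x) * (-(i : ℂ)) * w ^ (-i - 1))
      = -((starRingEnd ℂ) (w * A) * w⁻¹) := by
    rw [hA, map_mul, map_sum, Finset.mul_sum, Finset.sum_mul, ← Finset.sum_neg_distrib]
    refine Finset.sum_congr rfl fun i _ => ?_
    rw [map_mul, map_mul, hcp, hcw, map_intCast]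
    have h1 : w ^ (-i - 1) = w ^ (-(i - 1)) * w⁻¹ * w⁻¹ := by
      rw [show (-i - 1 : ℤ) = (-(i - 1)) + (-1) + (-1) by ring, zpow_add₀ hw0,
        zpow_add₀ hw0, zpow_neg_one]
    rw [h1]
    ring
  have hE : (∑ i ∈ S, zc i x * (i : ℂ) * Complex.I * w ^ i)
      = Complex.I * (w * A) := by
    rw [hA, Finset.mul_sum, Finset.mul_sum]
    refine Finset.sum_congr rfl fun i _ => ?_
    have h1 : w ^ i = w * w ^ (i - 1) := by
      rw [zpow_sub_one₀ hw0]; field_simp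
    rw [h1]; ring
  rw [hB, hD, hE]
  have key : w * (A * (starRingEnd ℂ) Z - Z * -((starRingEnd ℂ) (w * A) * w⁻¹))
      = (w * A) * (starRingEnd ℂ) Z + (starRingEnd ℂ) ((w * A) * (starRingEnd ℂ) Z) := by
    simp only [map_mul, Complex.conj_conj]
    field_simp
    ring
  rw [key]
  constructor
  · rw [Complex.add_conj]
    simp
  · rw [Complex.add_conj]
    have : (Complex.I * (w * A) * (starRingEnd ℂ) Z).im
        = ((w * A) * (starRingEnd ℂ) Z).re := by
      rw [mul_assoc, Complex.mul_im]
      simp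
    rw [this]
end
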